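/- arXiv:2509.05132 — 7 statements merged into one kernel-verified Lean document; each statement's English description precedes it below -/
import Mathlib

section
/- Let G = (V,E) be an undirected graph with V = {1,...,n} where the vertex labels are identified with the DFS numbering. Define p(v) = max{u ∈ N(v) : u < v} if this set is nonempty, and p(v) = 0 otherwise. If the numbering of G is a valid DFS numbering (i.e., arises from some depth-first search run), then for every vertex v, p(v) is the parent of v in the DFS forest (with p(v) = 0 exactly when v is the first-discovered vertex of its connected component). -/
open Classical

/-- `adj` is (the adjacency relation of) a simple undirected graph on vertex set `{1,…,n}`. -/
def IsGraphOn (n : ℕ) (adj : ℕ → ℕ → Prop) : Prop :=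
  Symmetric adj ∧ ∀ u v, adj u v → 1 ≤ u ∧ u ≤ n ∧ 1 ≤ v ∧ v ≤ n ∧ u ≠ v

/-- `p(v)`: the largest neighbour of `v` that is smaller than `v`, and `0` if none exists
(`sSup ∅ = 0` in `ℕ`). -/
noncomputable def par (adj : ℕ → ℕ → Prop) (v : ℕ) : ℕ :=
  sSup {u | adj u v ∧ u < v}

/-- `(v, {u,w})` is a conflicting pair: `{u,w}` is an edge and `p(v) < u < v < w`. -/
def Conflict (adj : ℕ → ℕ → Prop) (v u w : ℕ) : Prop :=
  adj u w ∧ par adj v < u ∧ u < v ∧ v < w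

/-- One step of a (nondeterministic) depth-first search.  The state consists of the list of
already discovered vertices, in order of discovery and together with the recorded (possibly
virtual) parent from which each was discovered, and of the stack of active vertices
(the white path, top first). -/
inductive DFSStep (n : ℕ) (adj : ℕ → ℕ → Prop) :
    List (ℕ × ℕ) × List ℕ → List (ℕ × ℕ) × List ℕ → Prop
  | root (v : ℕ) (order : List (ℕ × ℕ)) (hv1 : 1 ≤ v) (hv2 : v ≤ n)
      (hnd : v ∉ order.map Prod.fst) :
      DFSStep n adj (order, []) (order ++ [(v, 0)], [v])
  | descend (v t : ℕ) (order : List (ℕ × ℕ)) (stack : List ℕ)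
      (hadj : adj t v) (hnd : v ∉ order.map Prod.fst) :
      DFSStep n adj (order, t :: stack) (order ++ [(v, t)], v :: t :: stack)
  | backtrack (t : ℕ) (order : List (ℕ × ℕ)) (stack : List ℕ)
      (hall : ∀ u, adj t u → u ∈ order.map Prod.fst) :
      DFSStep n adj (order, t :: stack) (order, stack)

/-- A complete DFS run discovering the vertices in the order given by the list `order`. -/
def DFSRun (n : ℕ) (adj : ℕ → ℕ → Prop) (order : List (ℕ × ℕ)) : Prop :=
  Relation.ReflTransGen (DFSStep n adj) ([], []) (order, [])

/-- The labelling `f` is a valid DFS numbering of the graph: some DFS run discovers the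
vertices in the order of increasing labels `1, 2, …, n`. -/
def ValidDFSLabel (n : ℕ) (adj : ℕ → ℕ → Prop) (f : ℕ → ℕ) : Prop :=
  ∃ order, DFSRun n adj order ∧ (order.map Prod.fst).map f = List.range' 1 n

/-- The identity labelling on `{1,…,n}` is a valid DFS numbering of the graph. -/
def ValidDFS (n : ℕ) (adj : ℕ → ℕ → Prop) : Prop :=
  ValidDFSLabel n adj id

/-- The graph is connected (on its vertex set `{1,…,n}`). -/
def ConnOn (n : ℕ) (adj : ℕ → ℕ → Prop) : Prop :=
  ∀ u v, 1 ≤ u → u ≤ n → 1 ≤ v → v ≤ n → Relation.ReflTransGen adj u v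

/-- The degree of a vertex. -/
noncomputable def degree (adj : ℕ → ℕ → Prop) (v : ℕ) : ℕ :=
  Set.ncard {u | adj u v}

/-- The size `|E △ E'|` of the symmetric difference of the edge sets of two graphs
(given by symmetric adjacency relations). -/
noncomputable def edgeDiff (a b : ℕ → ℕ → Prop) : ℕ :=
  Set.ncard {p : ℕ × ℕ | p.1 < p.2 ∧ ¬(a p.1 p.2 ↔ b p.1 p.2)}

/-!
Along a run whose discovery order is `1, 2, …`, the stack is decreasing and every discovered
vertex that has left the stack has all its neighbours discovered. Hence, when `v` is discovered
from the top `t` of the stack, each smaller neighbour of `v` is still on the stack (otherwise `v`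
would already be discovered), so it is at most `t`: `t = p(v)`. When `v` is a root, the stack is
empty, so `{1, …, v - 1}` is closed under adjacency: `v` has no smaller neighbour and nothing
smaller reaches it.
-/

lemma par_eq_zero_of_forall_le {adj : ℕ → ℕ → Prop} {v : ℕ}
    (h : ∀ u, 1 ≤ u → adj u v → v ≤ u) : par adj v = 0 := by
  rw [par, ← Nat.le_zero, csSup_le_iff' ⟨v, fun u hu => hu.2.le⟩]
  rintro u ⟨hadj, huv⟩
  by_contra! hu
  exact absurd (h u hu hadj) (not_le.2 huv)

lemma par_eq_of_isGreatest {adj : ℕ → ℕ → Prop} {v t : ℕ} (hadj : adj t v) (hlt : t < v)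
    (hmax : ∀ u, adj u v → u < v → u ≤ t) : par adj v = t :=
  IsGreatest.csSup_eq ⟨⟨hadj, hlt⟩, fun u hu => hmax u hu.1 hu.2⟩

lemma Relation.ReflTransGen.mem_of_closed {α : Type*} {r : α → α → Prop} {s : Set α}
    (hs : ∀ a ∈ s, ∀ b, r a b → b ∈ s) {a b : α} (h : Relation.ReflTransGen r a b)
    (ha : a ∈ s) : b ∈ s := by
  induction h with
  | refl => exact ha
  | tail _ hbc ih => exact hs _ ih _ hbc

lemma map_fst_append_eq_range' {order : List (ℕ × ℕ)} {v t : ℕ}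
    (h : (order ++ [(v, t)]).map Prod.fst = List.range' 1 (order ++ [(v, t)]).length) :
    order.map Prod.fst = List.range' 1 order.length ∧ v = order.length + 1 := by
  rw [List.length_append, List.length_singleton, List.range'_concat, List.map_append] at h
  obtain ⟨hO, hv⟩ := List.append_inj' h (by simp)
  simp only [List.map_cons, List.map_nil, List.cons.injEq, and_true] at hv
  exact ⟨hO, by omega⟩

lemma mem_map_fst_of_lt {order : List (ℕ × ℕ)} {v : ℕ}
    (hO : order.map Prod.fst = List.range' 1 order.length)
    (hv : v = order.length + 1) {u : ℕ} (hu : 1 ≤ u) (huv : u < v) :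
    u ∈ order.map Prod.fst := by
  rw [hO, List.mem_range'_1]
  omega

structure DFSInv (adj : ℕ → ℕ → Prop) (order : List (ℕ × ℕ)) (stack : List ℕ) :
    Prop where
  stack_pairwise : stack.Pairwise (· > ·)
  stack_subset : ∀ s ∈ stack, s ∈ order.map Prod.fst
  closed : ∀ u ∈ order.map Prod.fst, u ∉ stack →
    ∀ w, adj u w → w ∈ order.map Prod.fst
  parent_eq_par : ∀ p ∈ order, p.2 = par adj p.1
  root_le_of_reach : ∀ p ∈ order, p.2 = 0 →
    ∀ u, 1 ≤ u → Relation.ReflTransGen adj u p.1 → p.1 ≤ u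

namespace DFSInv

variable {adj : ℕ → ℕ → Prop} {order : List (ℕ × ℕ)} {stack : List ℕ} {v t : ℕ}

lemma nil : DFSInv adj [] [] :=
  ⟨List.Pairwise.nil, by simp, by simp, by simp, by simp⟩

lemma push (h : DFSInv adj order stack) (hpairwise : (v :: stack).Pairwise (· > ·))
    (hpar : t = par adj v)
    (hroot : t = 0 → ∀ u, 1 ≤ u → Relation.ReflTransGen adj u v → v ≤ u) :
    DFSInv adj (order ++ [(v, t)]) (v :: stack) where
  stack_pairwise := hpairwise
  stack_subset s hs := by
    rw [List.map_append, List.mem_append]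
    rcases List.mem_cons.1 hs with rfl | hs
    · exact Or.inr (List.mem_singleton_self _)
    · exact Or.inl (h.stack_subset s hs)
  closed u hu hnS w hw := by
    rw [List.map_append, List.mem_append] at hu ⊢
    rcases hu with hu | hu
    · exact Or.inl (h.closed u hu (fun hS => hnS (List.mem_cons_of_mem v hS)) w hw)
    · exact absurd (List.mem_singleton.1 hu ▸ List.mem_cons_self) hnS
  parent_eq_par p hp := by
    rcases List.mem_append.1 hp with hp | hp
    · exact h.parent_eq_par p hp
    · exact List.mem_singleton.1 hp ▸ hpar
  root_le_of_reach p hp := by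
    rcases List.mem_append.1 hp with hp | hp
    · exact h.root_le_of_reach p hp
    · exact List.mem_singleton.1 hp ▸ hroot

lemma root (h : DFSInv adj order []) (hO : order.map Prod.fst = List.range' 1 order.length)
    (hv : v = order.length + 1) (hnd : v ∉ order.map Prod.fst) :
    DFSInv adj (order ++ [(v, 0)]) [v] := by
  have hclosed (u) (hu : u ∈ order.map Prod.fst) := h.closed u hu List.not_mem_nil
  have root_le (u) (hu : 1 ≤ u) (hreach : Relation.ReflTransGen adj u v) : v ≤ u := by
    by_contra! huv
    exact hnd (hreach.mem_of_closed hclosed (mem_map_fst_of_lt hO hv hu huv))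
  have hpar : par adj v = 0 :=
    par_eq_zero_of_forall_le fun u hu hadj => root_le u hu (.single hadj)
  exact h.push (List.pairwise_singleton _ _) hpar.symm fun _ => root_le

lemma descend (h : DFSInv adj order (t :: stack))
    (hO : order.map Prod.fst = List.range' 1 order.length) (hv : v = order.length + 1)
    (hadj : adj t v) (hnd : v ∉ order.map Prod.fst) :
    DFSInv adj (order ++ [(v, t)]) (v :: t :: stack) := by
  have ht : 1 ≤ t ∧ t < v := by
    have := h.stack_subset t List.mem_cons_self
    rw [hO, List.mem_range'_1] at this
    omega
  have le_top (u) (hu : u ∈ t :: stack) : u ≤ t := by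
    rcases List.mem_cons.1 hu with rfl | hu
    · exact le_rfl
    · exact (List.rel_of_pairwise_cons h.stack_pairwise hu).le
  have hmax (u) (hu : adj u v) (huv : u < v) : u ≤ t := by
    rcases Nat.eq_zero_or_pos u with rfl | hu1
    · exact Nat.zero_le t
    by_contra! htu
    have hoff : u ∉ t :: stack := fun hS => absurd (le_top u hS) (not_le.2 htu)
    exact hnd (h.closed u (mem_map_fst_of_lt hO hv hu1 huv) hoff v hu)
  refine h.push ?_ (par_eq_of_isGreatest hadj ht.2 hmax).symm (fun ht0 => by omega)
  exact List.pairwise_cons.2 ⟨fun u hu => (le_top u hu).trans_lt ht.2, h.stack_pairwise⟩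

lemma backtrack (h : DFSInv adj order (t :: stack))
    (hall : ∀ u, adj t u → u ∈ order.map Prod.fst) : DFSInv adj order stack where
  stack_pairwise := h.stack_pairwise.of_cons
  stack_subset s hs := h.stack_subset s (List.mem_cons_of_mem t hs)
  closed u hu hnS w hw := by
    by_cases hut : u = t
    · exact hall w (hut ▸ hw)
    · exact h.closed u hu (by simp [hut, hnS]) w hw
  parent_eq_par := h.parent_eq_par
  root_le_of_reach := h.root_le_of_reach

end DFSInv

lemma dfsInv_of_reflTransGen {n : ℕ} {adj : ℕ → ℕ → Prop} {order : List (ℕ × ℕ)}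
    {stack : List ℕ} (hrun : Relation.ReflTransGen (DFSStep n adj) ([], []) (order, stack))
    (hO : order.map Prod.fst = List.range' 1 order.length) : DFSInv adj order stack := by
  generalize hst : (order, stack) = st at hrun
  induction hrun generalizing order stack with
  | refl => cases hst; exact DFSInv.nil
  | tail _ hstep ih =>
    cases hst
    cases hstep with
    | root v order' _ _ hnd =>
      obtain ⟨hO', hv⟩ := map_fst_append_eq_range' hO
      exact (ih hO' rfl).root hO' hv hnd
    | descend v t order' stack' hadj hnd =>
      obtain ⟨hO', hv⟩ := map_fst_append_eq_range' hO
      exact (ih hO' rfl).descend hO' hv hadj hnd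
    | backtrack t order' stack' hall => exact (ih hO rfl).backtrack hall

theorem dfs_parent_eq_par_general (n : ℕ) (adj : ℕ → ℕ → Prop)
    (order : List (ℕ × ℕ)) (hrun : DFSRun n adj order)
    (hnum : order.map Prod.fst = List.range' 1 n) :
    (∀ p ∈ order, p.2 = par adj p.1) ∧
    (∀ v, 1 ≤ v → v ≤ n →
      (par adj v = 0 ↔ ∀ u, 1 ≤ u → Relation.ReflTransGen adj u v → v ≤ u)) := by
  have hlen : order.length = n := by simpa using congrArg List.length hnum
  have hinv := dfsInv_of_reflTransGen hrun (hlen ▸ hnum)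
  refine ⟨hinv.parent_eq_par, fun v hv1 hvn => ⟨fun hpar u hu hreach => ?_, fun hmin => ?_⟩⟩
  · obtain ⟨p, hp, rfl⟩ := List.mem_map.1 (hnum ▸ List.mem_range'_1.2 ⟨hv1, by omega⟩ :
      v ∈ order.map Prod.fst)
    exact hinv.root_le_of_reach p hp (hpar ▸ hinv.parent_eq_par p hp) u hu hreach
  · exact par_eq_zero_of_forall_le fun u hu hadj => hmin u hu (.single hadj)

/-- If the identity numbering of `G` is a valid DFS numbering, then in any
DFS run realising it every vertex `v` is discovered from `p(v)` (with virtual parent `0`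
recorded for roots), i.e. `p(v)` is the parent of `v` in the DFS forest; moreover
`p(v) = 0` exactly when `v` is the first-discovered (= smallest-numbered) vertex of its
connected component. -/
theorem dfs_parent_eq_par (n : ℕ) (adj : ℕ → ℕ → Prop) (hG : IsGraphOn n adj)
    (order : List (ℕ × ℕ)) (hrun : DFSRun n adj order)
    (hnum : order.map Prod.fst = List.range' 1 n) :
    (∀ p ∈ order, p.2 = par adj p.1) ∧
    (∀ v, 1 ≤ v → v ≤ n →
      (par adj v = 0 ↔ ∀ u, 1 ≤ u → Relation.ReflTransGen adj u v → v ≤ u)) :=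
  dfs_parent_eq_par_general n adj order hrun hnum
end

section
/- Let G = (V,E) be an undirected graph with V = {1,...,n}, and define p(v) = max{u ∈ N(v) : u < v} (or 0 if no neighbor of v is smaller than v). Then the identity labeling is a valid DFS numbering of G if and only if there exists no conflicting pair, i.e., no vertex v and edge {u,w} ∈ E with p(v) < u < v < w. -/
open Classical

/-!
While vertex `v` is being discovered by a DFS visiting `1, 2, …, n` in order, every vertex
`u < v` with a neighbour `w > v` is still on the stack, and the stack is increasing from bottom
to top. If `v` is entered from `t`, the top of the stack, then `t ≤ p(v)`, so a conflicting pair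
`p(v) < u < v < w` cannot exist. Conversely, in the absence of conflicting pairs, before
discovering `v` one may backtrack every stack vertex above `p(v)`: such a vertex `t` has no
undiscovered neighbour, since a neighbour `w > v` would make `(v, {t, w})` conflicting. Then
`v` is entered from `p(v)`, now on top of the stack, or as a new root if `p(v) = 0`.
-/

open Relation

variable {n : ℕ} {adj : ℕ → ℕ → Prop}

theorem le_par_of_adj {t v : ℕ} (h : adj t v) (hlt : t < v) : t ≤ par adj v :=
  le_csSup ⟨v, fun _ hx => hx.2.le⟩ ⟨h, hlt⟩

theorem par_adj_of_ne_zero {v : ℕ} (h : par adj v ≠ 0) : adj (par adj v) v ∧ par adj v < v := by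
  have hne : {u | adj u v ∧ u < v}.Nonempty :=
    Set.nonempty_iff_ne_empty.2 fun hempty => h (by simp [par, hempty])
  exact Nat.sSup_mem hne ⟨v, fun _ hx => hx.2.le⟩

theorem exists_eq_range'_of_append_singleton_prefix {l : List ℕ} {v n : ℕ}
    (h : l ++ [v] <+: List.range' 1 n) : ∃ k, l = List.range' 1 k ∧ v = k + 1 := by
  have hlen : l.length + 1 ≤ n := by simpa using h.length_le
  rw [List.prefix_iff_eq_take, List.length_append, List.length_singleton,
    List.take_range'_of_length_ge hlen, List.range'_1_concat] at h
  obtain ⟨hl, hv⟩ := List.append_inj' h rfl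
  exact ⟨l.length, hl, by simpa [Nat.add_comm] using hv⟩

def DFSInvariant (adj : ℕ → ℕ → Prop) (st : List (ℕ × ℕ) × List ℕ) : Prop :=
  st.2.reverse.Sublist (st.1.map Prod.fst) ∧
    ∀ u ∈ st.1.map Prod.fst, u ∉ st.2 → ∀ x, adj u x → x ∈ st.1.map Prod.fst

theorem DFSStep.invariant {a b : List (ℕ × ℕ) × List ℕ} (h : DFSStep n adj a b)
    (ha : DFSInvariant adj a) : DFSInvariant adj b := by
  obtain ⟨hsub, hdone⟩ := ha
  cases h with
  | root v order =>
    refine ⟨by simp, fun u hu hus x hx => ?_⟩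
    rw [List.map_append, List.mem_append] at hu ⊢
    exact .inl (hdone u (hu.resolve_right (by simpa using hus)) List.not_mem_nil x hx)
  | descend v t order stack =>
    refine ⟨by simpa using hsub.append (List.Sublist.refl [v]), fun u hu hus x hx => ?_⟩
    rw [List.map_append, List.mem_append] at hu ⊢
    refine .inl (hdone u (hu.resolve_right (by simpa using List.ne_of_not_mem_cons hus))
      (fun h => hus (.tail _ h)) x hx)
  | backtrack t order stack hall =>
    refine ⟨(List.reverse_sublist.2 (List.sublist_cons_self t stack)).trans hsub,
      fun u hu hus x hx => ?_⟩
    by_cases hut : u = t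
    · subst hut
      exact hall x hx
    · exact hdone u hu (by simp [hut, hus]) x hx

theorem DFSInvariant.of_reach {a : List (ℕ × ℕ) × List ℕ}
    (h : ReflTransGen (DFSStep n adj) ([], []) a) : DFSInvariant adj a := by
  induction h with
  | refl => exact ⟨List.Sublist.slnil, by simp⟩
  | tail _ hstep ih => exact hstep.invariant ih

theorem DFSStep.fst_prefix {a b : List (ℕ × ℕ) × List ℕ} (h : DFSStep n adj a b) :
    a.1 <+: b.1 := by
  cases h
  · exact List.prefix_append _ _
  · exact List.prefix_append _ _
  · exact List.prefix_refl _

theorem fst_prefix_of_reach {a b : List (ℕ × ℕ) × List ℕ}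
    (h : ReflTransGen (DFSStep n adj) a b) : a.1 <+: b.1 := by
  induction h with
  | refl => exact List.prefix_refl _
  | tail _ hstep ih => exact ih.trans hstep.fst_prefix

theorem DFSStep.map_fst_eq_of_discovers {a b : List (ℕ × ℕ) × List ℕ} {v : ℕ}
    (h : DFSStep n adj a b) (hva : v ∉ a.1.map Prod.fst) (hvb : v ∈ b.1.map Prod.fst) :
    b.1.map Prod.fst = a.1.map Prod.fst ++ [v] := by
  cases h with
  | backtrack => exact absurd hvb hva
  | _ => simp_all

theorem exists_step_discovers {a c : List (ℕ × ℕ) × List ℕ} {v : ℕ}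
    (h : ReflTransGen (DFSStep n adj) a c)
    (hva : v ∉ a.1.map Prod.fst) (hvc : v ∈ c.1.map Prod.fst) :
    ∃ b b', ReflTransGen (DFSStep n adj) a b ∧ DFSStep n adj b b' ∧
      ReflTransGen (DFSStep n adj) b' c ∧ v ∉ b.1.map Prod.fst ∧ v ∈ b'.1.map Prod.fst := by
  induction h with
  | refl => exact absurd hvc hva
  | @tail b c hab hbc ih =>
    by_cases hvb : v ∈ b.1.map Prod.fst
    · obtain ⟨b₀, b₀', h₁, h₂, h₃, h₄, h₅⟩ := ih hvb
      exact ⟨b₀, b₀', h₁, h₂, h₃.tail hbc, h₄, h₅⟩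
    · exact ⟨b, c, hab, hbc, .refl, hvb, hvc⟩

theorem DFSStep.le_par_of_mem_stack {a b : List (ℕ × ℕ) × List ℕ} {u v : ℕ}
    (h : DFSStep n adj a b) (ha : DFSInvariant adj a)
    (hva : v ∉ a.1.map Prod.fst) (hvb : v ∈ b.1.map Prod.fst)
    (hsorted : (a.1.map Prod.fst ++ [v]).Pairwise (· < ·)) (hu : u ∈ a.2) :
    u ≤ par adj v := by
  cases h with
  | root => simp at hu
  | backtrack => exact absurd hvb hva
  | descend v' t order stack hadj =>
    obtain rfl : v' = v := by simp_all
    have hstack : (stack.reverse ++ [t] ++ [v']).Pairwise (· < ·) := by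
      simpa using hsorted.sublist (ha.1.append (List.Sublist.refl [v']))
    simp only [List.pairwise_append, List.mem_append, List.mem_reverse, List.mem_singleton]
      at hstack
    have hut : u ≤ t := by
      rcases List.mem_cons.1 hu with rfl | hu
      · exact le_rfl
      · exact (hstack.1.2.2 u hu t rfl).le
    exact hut.trans (le_par_of_adj hadj (hstack.2.2 t (.inr rfl) v' rfl))

theorem not_conflict_of_validDFS (hG : IsGraphOn n adj) (h : ValidDFS n adj) :
    ¬∃ v u w, Conflict adj v u w := by
  rintro ⟨v, u, w, huw, hpu, huv, hvw⟩
  obtain ⟨order, hrun, horder⟩ := h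
  rw [List.map_id] at horder
  have hwn := (hG.2 u w huw).2.2.2.1
  obtain ⟨a, b, hreach, hstep, hrest, hva, hvb⟩ :=
    exists_step_discovers (v := v) hrun (by simp) (by rw [horder, List.mem_range'_1]; omega)
  have hprefix : a.1.map Prod.fst ++ [v] <+: List.range' 1 n := by
    rw [← hstep.map_fst_eq_of_discovers hva hvb, ← horder]
    exact (fst_prefix_of_reach hrest).map _
  obtain ⟨k, hk, rfl⟩ := exists_eq_range'_of_append_singleton_prefix hprefix
  have hinv := DFSInvariant.of_reach hreach
  have hu_on_stack : u ∈ a.2 := by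
    by_contra hu
    have hw := hinv.2 u (by rw [hk, List.mem_range'_1]; omega) hu w huw
    rw [hk, List.mem_range'_1] at hw
    omega
  have hsorted : (a.1.map Prod.fst ++ [k + 1]).Pairwise (· < ·) := by
    rw [hk, Nat.add_comm k 1, ← List.range'_1_concat]
    exact List.pairwise_lt_range'
  have := hstep.le_par_of_mem_stack hinv hva hvb hsorted hu_on_stack
  omega

section Sufficiency

theorem reach_backtrack_dropWhile (o : List (ℕ × ℕ)) (p : ℕ → Bool) :
    ∀ s : List ℕ, (∀ t ∈ s, p t → ∀ x, adj t x → x ∈ o.map Prod.fst) →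
      ReflTransGen (DFSStep n adj) (o, s) (o, s.dropWhile p)
  | [], _ => .refl
  | t :: s, hdone => by
    by_cases ht : p t
    · rw [List.dropWhile_cons_of_pos ht]
      exact .head (.backtrack t o s (hdone t List.mem_cons_self ht))
        (reach_backtrack_dropWhile o p s fun t' ht' => hdone t' (.tail _ ht'))
    · rw [List.dropWhile_cons_of_neg ht]

theorem List.mem_dropWhile_of_mem {α : Type*} {p : α → Bool} {l : List α} {a : α} (ha : a ∈ l)
    (hpa : ¬p a) : a ∈ l.dropWhile p := by
  induction l with
  | nil => simp at ha
  | cons b l ih =>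
    by_cases hpb : p b
    · rw [List.dropWhile_cons_of_pos hpb]
      exact ih ((List.mem_cons.1 ha).resolve_left fun hab => hpa (hab ▸ hpb))
    · rwa [List.dropWhile_cons_of_neg hpb]

theorem List.exists_dropWhile_lt_eq_cons {α : Type*} [LinearOrder α] {m : α} :
    ∀ {s : List α}, s.Pairwise (· > ·) → m ∈ s → ∃ r, s.dropWhile (m < ·) = m :: r
  | a :: s, hs, hm => by
    rw [List.pairwise_cons] at hs
    by_cases hma : m < a
    · rw [List.dropWhile_cons_of_pos (by simpa using hma)]
      exact exists_dropWhile_lt_eq_cons hs.2 ((List.mem_cons.1 hm).resolve_left hma.ne)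
    · rw [List.dropWhile_cons_of_neg (by simpa using hma)]
      rcases List.mem_cons.1 hm with rfl | hm
      · exact ⟨s, rfl⟩
      · exact absurd (hs.1 m hm) hma

structure IdentityDFSState (adj : ℕ → ℕ → Prop) (k : ℕ) (o : List (ℕ × ℕ)) (s : List ℕ) :
    Prop where
  discovered : o.map Prod.fst = List.range' 1 k
  stack_anti : s.Pairwise (· > ·)
  stack_mem : ∀ t ∈ s, 1 ≤ t ∧ t ≤ k
  active_mem : ∀ t x, 1 ≤ t → t ≤ k → adj t x → k < x → t ∈ s

theorem le_of_adj_of_par_lt (hnc : ¬∃ v u w, Conflict adj v u w) {k t x : ℕ} (htk : t ≤ k)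
    (ht : par adj (k + 1) < t) (hx : adj t x) : x ≤ k := by
  by_contra! hkx
  obtain rfl | hlt : x = k + 1 ∨ k + 1 < x := by omega
  · exact absurd (le_par_of_adj hx (by omega)) (by omega)
  · exact hnc ⟨k + 1, t, x, hx, ht, by omega, hlt⟩

variable {k : ℕ} {o : List (ℕ × ℕ)} {s : List ℕ}

theorem IdentityDFSState.succ (hnc : ¬∃ v u w, Conflict adj v u w)
    (h : IdentityDFSState adj k o s) :
    IdentityDFSState adj (k + 1) (o ++ [(k + 1, par adj (k + 1))])
      ((k + 1) :: s.dropWhile (par adj (k + 1) < ·)) where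
  discovered := by
    rw [List.map_append, h.discovered, List.range'_1_concat, Nat.add_comm 1 k]
    rfl
  stack_anti := by
    refine List.pairwise_cons.2 ⟨fun t ht => ?_, h.stack_anti.sublist (List.dropWhile_sublist _)⟩
    have := (h.stack_mem t ((List.dropWhile_sublist _).subset ht)).2
    omega
  stack_mem t ht := by
    rcases List.mem_cons.1 ht with rfl | ht
    · omega
    · have := h.stack_mem t ((List.dropWhile_sublist _).subset ht)
      omega
  active_mem t x ht1 htk hx hkx := by
    rcases htk.eq_or_lt with rfl | htk
    · exact List.mem_cons_self
    · have htp : t ≤ par adj (k + 1) := by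
        by_contra! hpt
        exact absurd (le_of_adj_of_par_lt hnc (by omega) hpt hx) (by omega)
      exact .tail _ (List.mem_dropWhile_of_mem (h.active_mem t x ht1 (by omega) hx (by omega))
        (by simpa using htp))

theorem IdentityDFSState.reach_succ (hG : IsGraphOn n adj) (hnc : ¬∃ v u w, Conflict adj v u w)
    (h : IdentityDFSState adj k o s) (hk : k < n) :
    ReflTransGen (DFSStep n adj) (o, s)
      (o ++ [(k + 1, par adj (k + 1))], (k + 1) :: s.dropWhile (par adj (k + 1) < ·)) := by
  have hnew : k + 1 ∉ o.map Prod.fst := by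
    rw [h.discovered, List.mem_range'_1]
    omega
  refine (reach_backtrack_dropWhile o (par adj (k + 1) < ·) s fun t ht hpt x hx => ?_).tail ?_
  · rw [h.discovered, List.mem_range'_1]
    have := (hG.2 t x hx).2.2.1
    have := le_of_adj_of_par_lt hnc (h.stack_mem t ht).2 (by simpa using hpt) hx
    omega
  · by_cases hp : par adj (k + 1) = 0
    · have hpop : s.dropWhile (par adj (k + 1) < ·) = [] :=
        List.dropWhile_eq_nil_iff.2 fun t ht => hp ▸ decide_eq_true (h.stack_mem t ht).1
      rw [hpop, hp]
      exact .root (k + 1) o (by omega) hk hnew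
    · obtain ⟨hadj, hlt⟩ := par_adj_of_ne_zero hp
      obtain ⟨r, hr⟩ := List.exists_dropWhile_lt_eq_cons h.stack_anti
        (h.active_mem _ (k + 1) (by omega) (by omega) hadj (by omega))
      rw [hr]
      exact .descend (k + 1) _ o r hadj hnew

theorem exists_reach_identityDFSState (hG : IsGraphOn n adj)
    (hnc : ¬∃ v u w, Conflict adj v u w) :
    ∀ k ≤ n, ∃ o s, ReflTransGen (DFSStep n adj) ([], []) (o, s) ∧ IdentityDFSState adj k o s
  | 0, _ => ⟨[], [], .refl, ⟨rfl, .nil, by simp, fun _ _ _ _ _ _ => by omega⟩⟩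
  | k + 1, hk =>
    let ⟨_, _, hreach, h⟩ := exists_reach_identityDFSState hG hnc k (by omega)
    ⟨_, _, hreach.trans (h.reach_succ hG hnc hk), h.succ hnc⟩

theorem validDFS_of_not_conflict (hG : IsGraphOn n adj) (hnc : ¬∃ v u w, Conflict adj v u w) :
    ValidDFS n adj := by
  obtain ⟨o, s, hreach, h⟩ := exists_reach_identityDFSState hG hnc n le_rfl
  have hpop : s.dropWhile (0 < ·) = [] :=
    List.dropWhile_eq_nil_iff.2 fun t ht => decide_eq_true (h.stack_mem t ht).1
  refine ⟨o, hreach.trans (hpop ▸ reach_backtrack_dropWhile o _ s fun t _ _ x hx => ?_), ?_⟩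
  · rw [h.discovered, List.mem_range'_1]
    have := hG.2 t x hx
    omega
  · simp [h.discovered]

end Sufficiency

/-- The identity labelling is a valid DFS numbering of `G` if and only if
there is no conflicting pair, i.e. no vertex `v` and edge `{u,w}` with `p(v) < u < v < w`. -/
theorem validDFS_iff_no_conflict (n : ℕ) (adj : ℕ → ℕ → Prop) (hG : IsGraphOn n adj) :
    ValidDFS n adj ↔ ¬∃ v u w, Conflict adj v u w :=
  ⟨not_conflict_of_validDFS hG, validDFS_of_not_conflict hG⟩
end

section
/- Let G = (V,E) be an undirected graph on vertex set {1,...,n} with the implicit numbering, and let v ∈ V with v ≥ 2. Let G' be the graph obtained from G by adding the edge {v-1, v} (doing nothing if it is already present). Then G' has no conflicting pair involving v (i.e., no edge {u,w} with p'(v) < u < v < w, where p' is computed in G'), and every conflicting pair of G' is already a conflicting pair of G. -/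
open Classical

/-- Adding the edge `{v-1, v}` to `G` (doing nothing if already present)
creates no new conflicting pairs and resolves all conflicting pairs involving `v`. -/
theorem add_edge_fixes_vertex (n : ℕ) (adj : ℕ → ℕ → Prop) (hG : IsGraphOn n adj)
    (v : ℕ) (hv2 : 2 ≤ v) (hvn : v ≤ n) :
    let adj' : ℕ → ℕ → Prop := fun a b =>
      adj a b ∨ (a = v - 1 ∧ b = v) ∨ (a = v ∧ b = v - 1)
    (¬∃ u w, Conflict adj' v u w) ∧
    (∀ x u w, Conflict adj' x u w → Conflict adj x u w) := by
  intro adj'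
  have hpv : v - 1 ≤ par adj' v := by
    apply le_csSup ⟨v, fun u hu => le_of_lt hu.2⟩
    exact ⟨Or.inr (Or.inl ⟨rfl, rfl⟩), by omega⟩
  have h1 : ¬∃ u w, Conflict adj' v u w := by
    rintro ⟨u, w, hadj, h2, h3, h4⟩
    omega
  refine ⟨h1, fun x u w hc => ?_⟩
  have hxv : x ≠ v := fun h => h1 ⟨u, w, h ▸ hc⟩
  obtain ⟨hadj, h2, h3, h4⟩ := hc
  have hpar : par adj' x = par adj x := by
    unfold par
    congr 1
    ext u
    constructor
    · rintro ⟨hu | ⟨rfl, rfl⟩ | ⟨rfl, rfl⟩, hlt⟩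
      · exact ⟨hu, hlt⟩
      · exact absurd rfl hxv
      · omega
    · exact fun ⟨hu, hlt⟩ => ⟨Or.inl hu, hlt⟩
  rcases hadj with hadj | ⟨rfl, rfl⟩ | ⟨rfl, rfl⟩
  · exact ⟨hadj, hpar ▸ h2, h3, h4⟩
  · omega
  · omega
end

section
/- Let G = (V,E) be an undirected graph on {1,...,n} with the implicit numbering, and let {u,w} ∈ E with u < w. Let G' be obtained from G by removing the edge {u,w} and adding the edge {w-1,w} (if not already present). Then every conflicting pair of G' is a conflicting pair of G, and G' has no conflicting pair involving the edge {u,w} (which is absent) and no conflicting pair involving the vertex w. -/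
open Classical

/-- Removing an edge `{u,w}` (with `u < w`) and adding `{w-1,w}` (if not
already present) creates no new conflicting pairs; the resulting graph has no conflicting
pair involving the (now absent) edge `{u,w}` and none involving the vertex `w`. -/
theorem remove_edge_fix (n : ℕ) (adj : ℕ → ℕ → Prop) (hG : IsGraphOn n adj)
    (u w : ℕ) (hadj : adj u w) (huw : u < w) :
    let adj' : ℕ → ℕ → Prop := fun a b =>
      (adj a b ∧ ¬((a = u ∧ b = w) ∨ (a = w ∧ b = u))) ∨
      (a = w - 1 ∧ b = w) ∨ (a = w ∧ b = w - 1)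
    (∀ x a b, Conflict adj' x a b → Conflict adj x a b) ∧
    (∀ x, ¬Conflict adj' x u w) ∧
    (∀ a b, ¬Conflict adj' w a b) := by
  intro adj'
  have hw1 : 1 ≤ w := lt_of_le_of_lt (Nat.zero_le u) huw
  have hparw : par adj' w = w - 1 := by
    have hmem : (w - 1) ∈ {a | adj' a w ∧ a < w} :=
      ⟨Or.inr (Or.inl ⟨rfl, rfl⟩), by omega⟩
    refine le_antisymm (csSup_le ⟨_, hmem⟩ fun a ha => by
      obtain ⟨-, h2⟩ := ha; omega) ?_
    exact le_csSup ⟨w, fun a ha => le_of_lt ha.2⟩ hmem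
  have hparmono : ∀ x, par adj x ≤ par adj' x := by
    intro x
    by_cases hx : x = w
    · rw [hx, hparw]
      rcases Set.eq_empty_or_nonempty {a | adj a w ∧ a < w} with h | h
      · show sSup _ ≤ _
        rw [h, csSup_empty]
        exact Nat.zero_le _
      · exact csSup_le h fun a ha => by obtain ⟨-, h2⟩ := ha; omega
    · rcases Set.eq_empty_or_nonempty {a | adj a x ∧ a < x} with h | h
      · show sSup _ ≤ _
        rw [h, csSup_empty]
        exact Nat.zero_le _
      · refine csSup_le_csSup ⟨x, fun a ha => le_of_lt ha.2⟩ h ?_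
        rintro a ⟨ha, hax⟩
        refine ⟨Or.inl ⟨ha, ?_⟩, hax⟩
        rintro (⟨rfl, rfl⟩ | ⟨rfl, rfl⟩)
        · exact hx rfl
        · omega
  refine ⟨?_, ?_, ?_⟩
  · rintro x a b ⟨hab, hp, hax, hxb⟩
    have hadjab : adj a b := by
      rcases hab with ⟨h, _⟩ | ⟨rfl, rfl⟩ | ⟨rfl, rfl⟩
      · exact h
      · omega
      · omega
    exact ⟨hadjab, lt_of_le_of_lt (hparmono x) hp, hax, hxb⟩
  · rintro x ⟨hab, hp, hax, hxb⟩
    rcases hab with ⟨_, h⟩ | ⟨h1, _⟩ | ⟨h1, h2⟩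
    · exact h (Or.inl ⟨rfl, rfl⟩)
    · omega
    · omega
  · rintro a b ⟨hab, hp, hax, hxb⟩
    rw [hparw] at hp
    omega
end

section
/- Let G = (V,E) be a connected undirected graph on {1,...,n} with maximum degree at most d ≥ 3 whose identity labeling is a valid DFS numbering. Let V_d be the set of vertices of degree exactly d in G. Then there exists a connected graph G' = (V,E') with maximum degree at most d-1 such that the identity labeling is a valid DFS numbering of G' and the symmetric difference of edge sets satisfies |E △ E'| ≤ 3·|V_d|. -/
/-!
The identity labelling is a DFS numbering exactly when there is a parent map `pt` with
`pt x < x` such that, when `x + 1` is discovered, `pt (x + 1)` is an ancestor of `x` and every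
earlier vertex off the ancestor line of `x + 1` has all its neighbours `≤ x`. This static
condition replaces DFS runs throughout.

A vertex `v` of degree `d` all of whose edges are tree edges has at least two children. Its last
child `c` is re-hung under `c - 1`: that vertex lies in the subtree of an older sibling, so it is
finished when `c` is discovered and all its neighbours are smaller than it. Every other vertex of
degree `d` drops its two largest non-tree edges and every such `c - 1` its largest one; removing
non-tree edges keeps the parent-map condition. A vertex of degree `d` that is also some `c - 1`
gains the edge to `c`, but all its edges other than the tree edge are non-tree edges, so it can
afford to drop two. Each vertex of degree `d` is charged at most three changed edges.
-/

open Classical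

def ancestors (pt : ℕ → ℕ) (x : ℕ) : Set ℕ := Set.range fun i => pt^[i] x

section Ancestors

variable {pt : ℕ → ℕ} {u x : ℕ}

lemma mem_ancestors_self (pt : ℕ → ℕ) (x : ℕ) : x ∈ ancestors pt x := ⟨0, rfl⟩

lemma mem_ancestors_iff : u ∈ ancestors pt x ↔ u = x ∨ u ∈ ancestors pt (pt x) := by
  constructor
  · rintro ⟨_ | i, rfl⟩
    · exact Or.inl rfl
    · exact Or.inr ⟨i, (Function.iterate_succ_apply pt i x).symm⟩
  · rintro (rfl | ⟨i, rfl⟩)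
    · exact mem_ancestors_self pt u
    · exact ⟨i + 1, Function.iterate_succ_apply pt i x⟩

lemma ancestors_parent_subset : ancestors pt (pt x) ⊆ ancestors pt x :=
  fun _ hu => mem_ancestors_iff.2 (Or.inr hu)

lemma parent_mem_ancestors (pt : ℕ → ℕ) (x : ℕ) : pt x ∈ ancestors pt x :=
  ancestors_parent_subset (mem_ancestors_self pt (pt x))

lemma ancestors_subset_of_mem (hu : u ∈ ancestors pt x) : ancestors pt u ⊆ ancestors pt x := by
  obtain ⟨j, rfl⟩ := hu
  rintro _ ⟨i, rfl⟩
  exact ⟨i + j, Function.iterate_add_apply pt i j x⟩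

variable (hpt : ∀ x, pt x ≤ x - 1)
include hpt

lemma iterate_le_sub (i x : ℕ) : pt^[i] x ≤ x - i := by
  induction i with
  | zero => simp
  | succ i ih =>
    rw [Function.iterate_succ_apply']
    have := hpt (pt^[i] x)
    omega

lemma le_of_mem_ancestors (hu : u ∈ ancestors pt x) : u ≤ x := by
  obtain ⟨i, rfl⟩ := hu
  exact (iterate_le_sub hpt i x).trans (Nat.sub_le x i)

lemma zero_mem_ancestors (x : ℕ) : 0 ∈ ancestors pt x :=
  ⟨x, Nat.eq_zero_of_le_zero ((iterate_le_sub hpt x x).trans_eq (Nat.sub_self x))⟩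

lemma ancestors_subset_ancestors {pt' : ℕ → ℕ} (hpt' : ∀ x, pt' x ≤ x - 1)
    (h : ∀ x, pt x ∈ ancestors pt (pt' x)) (x : ℕ) : ancestors pt x ⊆ ancestors pt' x := by
  induction x using Nat.strong_induction_on with
  | _ x ih =>
    intro u hu
    rcases mem_ancestors_iff.1 hu with rfl | hu
    · exact mem_ancestors_self pt' u
    · rcases Nat.eq_zero_or_pos x with rfl | hx
      · have hu0 : u = 0 := by
          have := le_of_mem_ancestors hpt hu
          have := hpt 0
          omega
        exact hu0 ▸ mem_ancestors_self pt' 0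
      · have hlt : pt' x < x := by have := hpt' x; omega
        exact ancestors_parent_subset
          (ih _ hlt (ancestors_subset_of_mem (h x) hu))

end Ancestors

/-- The DFS stack whose top is `x`. The `min` only serves termination; under `pt x ≤ x - 1` it
is `pt x`. -/
def ancestorList (pt : ℕ → ℕ) (x : ℕ) : List ℕ :=
  if x = 0 then [] else x :: ancestorList pt (min (pt x) (x - 1))
termination_by x

lemma ancestorList_zero (pt : ℕ → ℕ) : ancestorList pt 0 = [] := by
  rw [ancestorList, if_pos rfl]

lemma ancestorList_of_ne_zero {pt : ℕ → ℕ} (hpt : ∀ x, pt x ≤ x - 1) {x : ℕ} (hx : x ≠ 0) :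
    ancestorList pt x = x :: ancestorList pt (pt x) := by
  rw [ancestorList, if_neg hx, min_eq_left (hpt x)]

lemma eq_of_ancestorList_eq_cons {pt : ℕ → ℕ} (hpt : ∀ x, pt x ≤ x - 1) {x t : ℕ}
    {rest : List ℕ} (h : ancestorList pt x = t :: rest) :
    x = t ∧ x ≠ 0 ∧ rest = ancestorList pt (pt x) := by
  by_cases hx : x = 0
  · simp [hx, ancestorList_zero] at h
  · rw [ancestorList_of_ne_zero hpt hx, List.cons.injEq] at h
    exact ⟨h.1, hx, h.2.symm⟩

def ClosedOff (adj : ℕ → ℕ → Prop) (pt : ℕ → ℕ) (k top : ℕ) : Prop :=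
  ∀ u ≤ k, u ∉ ancestors pt top → ∀ w, adj u w → w ≤ k

/-- `pt` is the parent map of a DFS run discovering `1, …, n` in this order. When `x + 1` is
discovered the stack is the ancestor line of `x + 1`: its parent is an ancestor of `x`, and every
earlier vertex off that line has been backtracked from, so its neighbours are all discovered. -/
structure IsDFSParent (n : ℕ) (adj : ℕ → ℕ → Prop) (pt : ℕ → ℕ) : Prop where
  le_pred : ∀ x, pt x ≤ x - 1
  adj_parent : ∀ x, 2 ≤ x → x ≤ n → adj (pt x) x
  parent_succ_mem : ∀ x < n, pt (x + 1) ∈ ancestors pt x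
  closedOff : ∀ x < n, ClosedOff adj pt x (x + 1)

def dfsOrder (pt : ℕ → ℕ) (k : ℕ) : List (ℕ × ℕ) := (List.range' 1 k).map fun x => (x, pt x)

lemma map_fst_dfsOrder (pt : ℕ → ℕ) (k : ℕ) : (dfsOrder pt k).map Prod.fst = List.range' 1 k := by
  simp [dfsOrder, Function.comp_def]

lemma dfsOrder_succ (pt : ℕ → ℕ) (k : ℕ) :
    dfsOrder pt (k + 1) = dfsOrder pt k ++ [(k + 1, pt (k + 1))] := by
  simp [dfsOrder, List.range'_concat, Nat.add_comm 1 k]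

section Sufficiency

variable {n : ℕ} {adj : ℕ → ℕ → Prop} {pt : ℕ → ℕ}

lemma reach_backtrack (hpt : ∀ x, pt x ≤ x - 1) (o : List (ℕ × ℕ)) {t : ℕ} (y : ℕ)
    (hty : t ∈ ancestors pt y)
    (hdone : ∀ u ∈ ancestors pt y, t < u → ∀ w, adj u w → w ∈ o.map Prod.fst) :
    Relation.ReflTransGen (DFSStep n adj) (o, ancestorList pt y) (o, ancestorList pt t) := by
  induction y using Nat.strong_induction_on with
  | _ y ih =>
    by_cases hyt : y = t
    · rw [hyt]
    have hty' : t ∈ ancestors pt (pt y) := (mem_ancestors_iff.1 hty).resolve_left (Ne.symm hyt)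
    have hlt : t < y := lt_of_le_of_ne (le_of_mem_ancestors hpt hty) (Ne.symm hyt)
    rw [ancestorList_of_ne_zero hpt (by omega)]
    refine .head (DFSStep.backtrack y o _ (hdone y (mem_ancestors_self pt y) hlt)) ?_
    exact ih (pt y) (by have := hpt y; omega) hty'
      fun u hu => hdone u (ancestors_parent_subset hu)

lemma IsDFSParent.reach (hG : IsGraphOn n adj) (h : IsDFSParent n adj pt) (k : ℕ) (hk : k ≤ n) :
    Relation.ReflTransGen (DFSStep n adj) ([], []) (dfsOrder pt k, ancestorList pt k) := by
  induction k with
  | zero => rw [ancestorList_zero]; rfl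
  | succ k ih =>
    have hdone : ∀ u ∈ ancestors pt k, pt (k + 1) < u → ∀ w, adj u w →
        w ∈ (dfsOrder pt k).map Prod.fst := by
      intro u hu hlt w hw
      have hnot : u ∉ ancestors pt (k + 1) := by
        rw [mem_ancestors_iff]
        have := le_of_mem_ancestors h.le_pred hu
        rintro (rfl | hu')
        · omega
        · have := le_of_mem_ancestors h.le_pred hu'
          omega
      have := h.closedOff k hk u (le_of_mem_ancestors h.le_pred hu) hnot w hw
      have := (hG.2 u w hw).2.2.1
      rw [map_fst_dfsOrder, List.mem_range'_1]
      omega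
    have hnew : k + 1 ∉ (dfsOrder pt k).map Prod.fst := by
      rw [map_fst_dfsOrder, List.mem_range'_1]; omega
    have hstep : DFSStep n adj (dfsOrder pt k, ancestorList pt (pt (k + 1)))
        (dfsOrder pt (k + 1), ancestorList pt (k + 1)) := by
      rw [dfsOrder_succ, ancestorList_of_ne_zero h.le_pred k.succ_ne_zero]
      rcases Nat.eq_zero_or_pos (pt (k + 1)) with h0 | hpos
      · rw [h0, ancestorList_zero]
        exact DFSStep.root _ _ (by omega) hk hnew
      · rw [ancestorList_of_ne_zero h.le_pred hpos.ne']
        have := h.le_pred (k + 1)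
        exact DFSStep.descend _ _ _ _ (h.adj_parent (k + 1) (by omega) hk) hnew
    exact (ih (by omega)).trans
      ((reach_backtrack h.le_pred _ k (h.parent_succ_mem k hk) hdone).tail hstep)

lemma IsDFSParent.validDFS (hG : IsGraphOn n adj) (h : IsDFSParent n adj pt) :
    ValidDFS n adj := by
  have hdone : ∀ u ∈ ancestors pt n, 0 < u → ∀ w, adj u w →
      w ∈ (dfsOrder pt n).map Prod.fst := by
    intro u _ _ w hw
    have := hG.2 u w hw
    rw [map_fst_dfsOrder, List.mem_range'_1]
    omega
  have hpop := reach_backtrack (n := n) (adj := adj) h.le_pred _ n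
    (zero_mem_ancestors h.le_pred n) hdone
  rw [ancestorList_zero] at hpop
  exact ⟨dfsOrder pt n, (h.reach hG n le_rfl).trans hpop, by simp [map_fst_dfsOrder]⟩

lemma IsDFSParent.connOn (hG : IsGraphOn n adj) (h : IsDFSParent n adj pt) : ConnOn n adj := by
  have hroot : ∀ x, 1 ≤ x → x ≤ n → Relation.ReflTransGen adj x 1 := by
    intro x
    induction x using Nat.strong_induction_on with
    | _ x ih =>
      intro hx1 hxn
      by_cases hx : x = 1
      · rw [hx]
      have hadj := h.adj_parent x (by omega) hxn
      have := hG.2 _ _ hadj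
      have := h.le_pred x
      exact .head (hG.1 hadj) (ih (pt x) (by omega) (by omega) (by omega))
  have : Std.Symm adj := ⟨fun _ _ h => hG.1 h⟩
  intro u v hu1 hun hv1 hvn
  exact (hroot u hu1 hun).trans (Relation.ReflTransGen.stdSymm.symm _ _ (hroot v hv1 hvn))

end Sufficiency

lemma ClosedOff.of_ancestors_subset {adj : ℕ → ℕ → Prop} {pt : ℕ → ℕ} {k top top' : ℕ}
    (h : ClosedOff adj pt k top) (hsub : ancestors pt top ⊆ ancestors pt top') :
    ClosedOff adj pt k top' :=
  fun u hu hnot => h u hu fun hmem => hnot (hsub hmem)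

lemma IsDFSParent.succ {k : ℕ} {adj : ℕ → ℕ → Prop} {pt : ℕ → ℕ} (h : IsDFSParent k adj pt)
    (hmem : pt (k + 1) ∈ ancestors pt k) (hcl : ClosedOff adj pt k (pt (k + 1)))
    (hadj : 1 ≤ k → adj (pt (k + 1)) (k + 1)) :
    IsDFSParent (k + 1) adj pt ∧ ClosedOff adj pt (k + 1) (k + 1) := by
  have hcl' : ClosedOff adj pt k (k + 1) := hcl.of_ancestors_subset ancestors_parent_subset
  refine ⟨⟨h.le_pred, fun x hx2 hxk => ?_, fun x hxk => ?_, fun x hxk => ?_⟩, ?_⟩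
  · rcases Nat.lt_or_ge x (k + 1) with hx | hx
    · exact h.adj_parent x hx2 (by omega)
    · exact (show x = k + 1 by omega) ▸ hadj (by omega)
  · rcases Nat.lt_or_ge x k with hx | hx
    · exact h.parent_succ_mem x hx
    · exact (show x = k by omega) ▸ hmem
  · rcases Nat.lt_or_ge x k with hx | hx
    · exact h.closedOff x hx
    · exact (show x = k by omega) ▸ hcl'
  · intro u hu hnot w hw
    have hne : u ≠ k + 1 := fun he => hnot (he ▸ mem_ancestors_self pt u)
    exact (hcl' u (by omega) hnot w hw).trans (Nat.le_succ k)

lemma le_of_closedOff_zero {n k : ℕ} {adj : ℕ → ℕ → Prop} {pt : ℕ → ℕ}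
    (hG : IsGraphOn n adj) (hconn : ConnOn n adj) (hpt : ∀ x, pt x ≤ x - 1)
    (hcl : ClosedOff adj pt k 0) (hk : 1 ≤ k) {v : ℕ} (hv1 : 1 ≤ v) (hvn : v ≤ n) :
    v ≤ k := by
  have hreach : ∀ x, Relation.ReflTransGen adj 1 x → x ≤ k := by
    intro x hx
    induction hx with
    | refl => exact hk
    | tail _ hab ih =>
      have := (hG.2 _ _ hab).1
      refine hcl _ ih (fun h0 => ?_) _ hab
      have := le_of_mem_ancestors hpt h0
      omega
  exact hreach v (hconn 1 v le_rfl (by omega) hv1 hvn)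

/-- The parent recorded for `x` in a run whose `i`-th discovery is `i + 1`, capped at `x - 1`. -/
def runParent (order : List (ℕ × ℕ)) (x : ℕ) : ℕ :=
  min ((order[x - 1]?.map Prod.snd).getD 0) (x - 1)

lemma eq_range'_of_prefix {l : List ℕ} {s n : ℕ} (h : l <+: List.range' s n) :
    l = List.range' s l.length :=
  List.ext_getElem (by simp) fun i h1 _ => by rw [h.getElem h1]; simp

def RunInvariant (adj : ℕ → ℕ → Prop) (pt : ℕ → ℕ) (s : List (ℕ × ℕ) × List ℕ) : Prop :=
  ∃ top, s.2 = ancestorList pt top ∧ IsDFSParent s.1.length adj pt ∧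
    top ∈ ancestors pt s.1.length ∧ ClosedOff adj pt s.1.length top

lemma runInvariant_nil (adj : ℕ → ℕ → Prop) {pt : ℕ → ℕ} (hpt : ∀ x, pt x ≤ x - 1) :
    RunInvariant adj pt ([], []) := by
  refine ⟨0, (ancestorList_zero pt).symm, ⟨hpt, ?_, ?_, ?_⟩, mem_ancestors_self pt 0, ?_⟩
  · intro x h2 h0; simp at h0; omega
  · intro x hx; simp at hx
  · intro x hx; simp at hx
  · intro u hu hnot
    exact absurd (Nat.le_zero.1 hu ▸ mem_ancestors_self pt 0) hnot

lemma runInvariant_discover {adj : ℕ → ℕ → Prop} {pt : ℕ → ℕ} {o : List (ℕ × ℕ)} {st : List ℕ}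
    {top : ℕ} (hst : st = ancestorList pt top) (h : IsDFSParent o.length adj pt)
    (hmem : top ∈ ancestors pt o.length) (hcl : ClosedOff adj pt o.length top)
    (hpv : pt (o.length + 1) = top) (hadj : 1 ≤ o.length → adj top (o.length + 1)) (p : ℕ) :
    RunInvariant adj pt (o ++ [(o.length + 1, p)], (o.length + 1) :: st) := by
  subst hpv
  obtain ⟨h', hcl'⟩ := h.succ hmem hcl hadj
  refine ⟨o.length + 1, ?_, ?_⟩
  · rw [hst, ancestorList_of_ne_zero h.le_pred (Nat.succ_ne_zero _)]
  · simpa using ⟨h', mem_ancestors_self pt _, hcl'⟩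

lemma DFSStep.fst_prefix_s6 {n : ℕ} {adj : ℕ → ℕ → Prop} {s s' : List (ℕ × ℕ) × List ℕ}
    (h : DFSStep n adj s s') : s.1 <+: s'.1 := by
  cases h <;> simp

section Necessity

variable {n : ℕ} {adj : ℕ → ℕ → Prop} {order : List (ℕ × ℕ)}
  (horder : order.map Prod.fst = List.range' 1 n)
include horder

lemma map_fst_of_prefix {o : List (ℕ × ℕ)} (h : o <+: order) :
    o.map Prod.fst = List.range' 1 o.length := by
  have := eq_range'_of_prefix (horder ▸ h.map Prod.fst)
  rwa [List.length_map] at this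

lemma runParent_of_prefix {o : List (ℕ × ℕ)} {v t : ℕ} (h : o ++ [(v, t)] <+: order)
    (ht : t ≤ o.length) : v = o.length + 1 ∧ runParent order v = t := by
  have hi : o.length < order.length := by have := h.length_le; simp at this; omega
  have hget : order[o.length] = (v, t) := by
    rw [← h.getElem (by simp)]; simp
  have hv : v = o.length + 1 := by
    have := congrArg (·[o.length]?) horder
    simp only [List.getElem?_map, List.getElem?_eq_getElem hi, hget] at this
    have hlen : order.length = n := by simpa using congrArg List.length horder
    rw [List.getElem?_range' (by omega)] at this
    simp at this
    omega
  refine ⟨hv, ?_⟩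
  simp [runParent, hv, List.getElem?_eq_getElem hi, hget]
  omega

lemma RunInvariant.step (hG : IsGraphOn n adj) (hconn : ConnOn n adj)
    {s s' : List (ℕ × ℕ) × List ℕ} (hinv : RunInvariant adj (runParent order) s)
    (hstep : DFSStep n adj s s') (hpre : s'.1 <+: order) :
    RunInvariant adj (runParent order) s' := by
  have hpt : ∀ x, runParent order x ≤ x - 1 := fun x => min_le_right _ _
  obtain ⟨top, hst, h, hmem, hcl⟩ := hinv
  cases hstep with
  | root v o hv1 hv2 _ =>
    dsimp only at hst h hmem hcl hpre ⊢
    have htop : top = 0 := by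
      by_contra hne
      rw [ancestorList_of_ne_zero hpt hne] at hst
      exact List.cons_ne_nil _ _ hst.symm
    subst htop
    obtain ⟨rfl, hpv⟩ := runParent_of_prefix horder hpre (Nat.zero_le _)
    have hk : o.length = 0 := by
      by_contra hk
      have := le_of_closedOff_zero hG hconn hpt hcl (by omega) hv1 hv2
      omega
    exact runInvariant_discover hst h hmem hcl hpv (by omega) 0
  | descend v t o stack hadj _ =>
    dsimp only at hst h hmem hcl hpre ⊢
    obtain ⟨rfl, -, -⟩ := eq_of_ancestorList_eq_cons hpt hst.symm
    obtain ⟨rfl, hpv⟩ := runParent_of_prefix horder hpre (le_of_mem_ancestors hpt hmem)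
    exact runInvariant_discover hst h hmem hcl hpv (fun _ => hadj) _
  | backtrack t o stack hall =>
    dsimp only at hst h hmem hcl hpre ⊢
    obtain ⟨rfl, -, hstack⟩ := eq_of_ancestorList_eq_cons hpt hst.symm
    refine ⟨_, hstack, h, ancestors_subset_of_mem hmem (parent_mem_ancestors _ _), ?_⟩
    intro u hu hnot w hw
    dsimp only at hu ⊢
    by_cases hut : u = top
    · have := hall w (hut ▸ hw)
      rw [map_fst_of_prefix horder hpre, List.mem_range'_1] at this
      omega
    · exact hcl u hu (fun hm => hnot ((mem_ancestors_iff.1 hm).resolve_left hut)) w hw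

end Necessity

theorem ValidDFS.exists_isDFSParent {n : ℕ} {adj : ℕ → ℕ → Prop} (hG : IsGraphOn n adj)
    (hconn : ConnOn n adj) (h : ValidDFS n adj) : ∃ pt, IsDFSParent n adj pt := by
  obtain ⟨order, hrun, horder⟩ := h
  rw [List.map_id] at horder
  have hinv : ∀ s, Relation.ReflTransGen (DFSStep n adj) ([], []) s → s.1 <+: order →
      RunInvariant adj (runParent order) s := by
    intro s hs
    induction hs with
    | refl => exact fun _ => runInvariant_nil adj fun x => min_le_right _ _
    | tail _ hstep ih =>
      exact fun hpre => (ih (hstep.fst_prefix_s6.trans hpre)).step horder hG hconn hstep hpre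
  obtain ⟨_, -, h, -⟩ := hinv _ hrun List.prefix_rfl
  have hlen : order.length = n := by simpa using congrArg List.length horder
  exact ⟨_, hlen ▸ h⟩

section Construction

variable (n d : ℕ) (adj : ℕ → ℕ → Prop) (pt : ℕ → ℕ)

def nonTreeNbrs (x : ℕ) : Set ℕ := {u | adj u x ∧ u ≠ pt x ∧ pt u ≠ x}

def children (v : ℕ) : Set ℕ := {w | adj v w ∧ pt w = v}

def maxDegVerts : Set ℕ := {v | 1 ≤ v ∧ v ≤ n ∧ degree adj v = d}

def treeHubs : Set ℕ := {v | v ∈ maxDegVerts n d adj ∧ nonTreeNbrs adj pt v = ∅}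

noncomputable def lastChild (v : ℕ) : ℕ := sSup (children adj pt v)

def grafted : Set ℕ := {x | pt x ∈ treeHubs n d adj pt ∧ x = lastChild adj pt (pt x)}

noncomputable def maxNonTree (x : ℕ) : ℕ := sSup (nonTreeNbrs adj pt x)

noncomputable def nextNonTree (x : ℕ) : ℕ :=
  sSup (nonTreeNbrs adj pt x \ {maxNonTree adj pt x})

/-- The edge `{u, w}` is deleted on behalf of `w`. -/
def Removes (u w : ℕ) : Prop :=
  (w ∈ grafted n d adj pt ∧ u = pt w) ∨
  (w ∈ maxDegVerts n d adj ∧ u ∈ nonTreeNbrs adj pt w ∧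
    (u = maxNonTree adj pt w ∨ u = nextNonTree adj pt w)) ∨
  (w + 1 ∈ grafted n d adj pt ∧ u ∈ nonTreeNbrs adj pt w ∧ u = maxNonTree adj pt w)

def Grafts (u w : ℕ) : Prop := w ∈ grafted n d adj pt ∧ u = w - 1

def reducedAdj (u w : ℕ) : Prop :=
  adj u w ∧ ¬Removes n d adj pt u w ∧ ¬Removes n d adj pt w u ∨
    Grafts n d adj pt u w ∨ Grafts n d adj pt w u

noncomputable def reducedParent (x : ℕ) : ℕ := if x ∈ grafted n d adj pt then x - 1 else pt x

/-- The at most three edges of `adj` and `reducedAdj` that differ on account of `v`. -/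
noncomputable def chargedEdges (v : ℕ) : Set (Sym2 ℕ) :=
  if v ∈ treeHubs n d adj pt then
    {s(v, lastChild adj pt v), s(lastChild adj pt v - 1, lastChild adj pt v),
      s(maxNonTree adj pt (lastChild adj pt v - 1), lastChild adj pt v - 1)}
  else {s(maxNonTree adj pt v, v), s(nextNonTree adj pt v, v)}

end Construction

lemma Set.Finite.sSup_mem_and_exists_lt {s : Set ℕ} (hs : s.Finite) (h : 1 < s.ncard) :
    sSup s ∈ s ∧ ∃ c ∈ s, c < sSup s := by
  obtain ⟨a, b, ha, hb, hab⟩ := (Set.one_lt_ncard_iff hs).1 h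
  have hmem := Nat.sSup_mem ⟨a, ha⟩ hs.bddAbove
  refine ⟨hmem, ?_⟩
  have hal := le_csSup hs.bddAbove ha
  have hbl := le_csSup hs.bddAbove hb
  by_cases has : a = sSup s
  · exact ⟨b, hb, lt_of_le_of_ne hbl (fun h => hab (has.trans h.symm))⟩
  · exact ⟨a, ha, lt_of_le_of_ne hal has⟩

section Reduction

variable {n d : ℕ} {adj : ℕ → ℕ → Prop} {pt : ℕ → ℕ}

lemma IsGraphOn.finite_nbrs (hG : IsGraphOn n adj) (x : ℕ) : {u | adj u x}.Finite :=
  (Set.finite_Icc 1 n).subset fun u hu => ⟨(hG.2 u x hu).1, (hG.2 u x hu).2.1⟩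

lemma IsGraphOn.finite_nonTreeNbrs (hG : IsGraphOn n adj) (x : ℕ) :
    (nonTreeNbrs adj pt x).Finite :=
  (hG.finite_nbrs x).subset fun _ hu => hu.1

lemma maxNonTree_mem (hG : IsGraphOn n adj) {x : ℕ} (hne : (nonTreeNbrs adj pt x).Nonempty) :
    maxNonTree adj pt x ∈ nonTreeNbrs adj pt x :=
  Nat.sSup_mem hne (hG.finite_nonTreeNbrs x).bddAbove

lemma nextNonTree_mem (hG : IsGraphOn n adj) {x : ℕ} (h : 1 < (nonTreeNbrs adj pt x).ncard) :
    nextNonTree adj pt x ∈ nonTreeNbrs adj pt x \ {maxNonTree adj pt x} := by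
  obtain ⟨-, c, hc, hlt⟩ := (hG.finite_nonTreeNbrs x).sSup_mem_and_exists_lt h
  exact Nat.sSup_mem ⟨c, hc, hlt.ne⟩ ((hG.finite_nonTreeNbrs x).sdiff).bddAbove

lemma degree_le_pred_of_not_mem_maxDegVerts (hG : IsGraphOn n adj)
    (hdeg : ∀ v, degree adj v ≤ d) {x : ℕ} (hx : x ∉ maxDegVerts n d adj) :
    degree adj x ≤ d - 1 := by
  by_cases hrange : 1 ≤ x ∧ x ≤ n
  · have := hdeg x
    have : degree adj x ≠ d := fun h => hx ⟨hrange.1, hrange.2, h⟩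
    omega
  · have hempty : {u | adj u x} = ∅ :=
      Set.eq_empty_of_forall_notMem fun u hu =>
        hrange ⟨(hG.2 u x hu).2.2.1, (hG.2 u x hu).2.2.2.1⟩
    simp [degree, hempty]

lemma one_lt_ncard_children (hG : IsGraphOn n adj) (hd : 3 ≤ d) {v : ℕ}
    (hv : v ∈ treeHubs n d adj pt) : 1 < (children adj pt v).ncard := by
  have hsub : {u | adj u v} ⊆ insert (pt v) (children adj pt v) := by
    intro u hu
    by_contra hnot
    simp only [Set.mem_insert_iff, not_or] at hnot
    have : u ∈ nonTreeNbrs adj pt v := ⟨hu, hnot.1, fun h => hnot.2 ⟨hG.1 hu, h⟩⟩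
    exact (hv.2 ▸ this : u ∈ (∅ : Set ℕ))
  have hfin : (children adj pt v).Finite := (hG.finite_nbrs v).subset fun _ hw => hG.1 hw.1
  have := (Set.ncard_le_ncard hsub (hfin.insert _)).trans (Set.ncard_insert_le _ _)
  have : degree adj v = d := hv.1.2.2
  simp only [degree] at *
  omega

/-- A hub's last child `c` has an older sibling, so `v < c - 1`. -/
lemma lastChild_spec (hG : IsGraphOn n adj) (hpt : ∀ x, pt x ≤ x - 1) (hd : 3 ≤ d) {v : ℕ}
    (hv : v ∈ treeHubs n d adj pt) :
    lastChild adj pt v ∈ children adj pt v ∧ v + 2 ≤ lastChild adj pt v := by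
  have hfin : (children adj pt v).Finite := (hG.finite_nbrs v).subset fun _ hw => hG.1 hw.1
  obtain ⟨hmem, c, ⟨hadj, hpc⟩, hlt⟩ :=
    hfin.sSup_mem_and_exists_lt (one_lt_ncard_children hG hd hv)
  have := hpt c
  have := (hG.2 v c hadj).2.2.1
  exact ⟨hmem, by unfold lastChild; omega⟩

lemma lastChild_mem_grafted (hG : IsGraphOn n adj) (hpt : ∀ x, pt x ≤ x - 1) (hd : 3 ≤ d)
    {v : ℕ} (hv : v ∈ treeHubs n d adj pt) : lastChild adj pt v ∈ grafted n d adj pt := by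
  have hpv : pt (lastChild adj pt v) = v := (lastChild_spec hG hpt hd hv).1.2
  refine ⟨?_, ?_⟩ <;> rw [hpv]
  exact hv

lemma grafted_spec (hG : IsGraphOn n adj) (hpt : ∀ x, pt x ≤ x - 1) (hd : 3 ≤ d) {x : ℕ}
    (hx : x ∈ grafted n d adj pt) :
    adj (pt x) x ∧ pt x + 2 ≤ x ∧ x ≤ n := by
  obtain ⟨hchild, hlt⟩ := lastChild_spec hG hpt hd hx.1
  rw [← hx.2] at hchild hlt
  exact ⟨hchild.1, hlt, (hG.2 _ _ hchild.1).2.2.2.1⟩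

/-- `x` lies in the subtree of an older sibling of the grafted `x + 1`, so it is finished when
`x + 1` is discovered. -/
lemma IsDFSParent.lt_of_adj_of_succ_mem_grafted (hP : IsDFSParent n adj pt)
    (hG : IsGraphOn n adj) (hd : 3 ≤ d) {x w : ℕ} (hx : x + 1 ∈ grafted n d adj pt)
    (hw : adj x w) : w < x := by
  obtain ⟨-, hlt, hxn⟩ := grafted_spec hG hP.le_pred hd hx
  have hnot : x ∉ ancestors pt (x + 1) := by
    rw [mem_ancestors_iff]
    rintro (h | h)
    · omega
    · have := le_of_mem_ancestors hP.le_pred h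
      omega
  have := hP.closedOff x (by omega) x le_rfl hnot w hw
  have := (hG.2 x w hw).2.2.2.2
  omega

lemma not_removes_parent (hpt : ∀ x, pt x ≤ x - 1) {x : ℕ} (hx1 : 1 ≤ x)
    (hx : x ∉ grafted n d adj pt) :
    ¬Removes n d adj pt (pt x) x ∧ ¬Removes n d adj pt x (pt x) := by
  constructor
  · rintro (⟨h, -⟩ | ⟨-, h, -⟩ | ⟨-, h, -⟩)
    · exact hx h
    · exact h.2.1 rfl
    · exact h.2.1 rfl
  · rintro (⟨-, h⟩ | ⟨-, h, -⟩ | ⟨-, h, -⟩)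
    · have := hpt x
      have := hpt (pt x)
      omega
    · exact h.2.2 rfl
    · exact h.2.2 rfl

lemma isGraphOn_reducedAdj (hG : IsGraphOn n adj) (hpt : ∀ x, pt x ≤ x - 1) (hd : 3 ≤ d) :
    IsGraphOn n (reducedAdj n d adj pt) := by
  refine ⟨fun u w h => ?_, fun u w h => ?_⟩
  · rcases h with ⟨h, h1, h2⟩ | h | h
    · exact Or.inl ⟨hG.1 h, h2, h1⟩
    · exact Or.inr (Or.inr h)
    · exact Or.inr (Or.inl h)
  · rcases h with ⟨h, -⟩ | ⟨hw, rfl⟩ | ⟨hu, rfl⟩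
    · exact hG.2 u w h
    · have := grafted_spec hG hpt hd hw
      omega
    · have := grafted_spec hG hpt hd hu
      omega

lemma reducedParent_of_mem {x : ℕ} (hx : x ∈ grafted n d adj pt) :
    reducedParent n d adj pt x = x - 1 :=
  if_pos hx

lemma reducedParent_of_not_mem {x : ℕ} (hx : x ∉ grafted n d adj pt) :
    reducedParent n d adj pt x = pt x :=
  if_neg hx

lemma reducedParent_le_pred (hpt : ∀ x, pt x ≤ x - 1) (x : ℕ) :
    reducedParent n d adj pt x ≤ x - 1 := by
  by_cases hx : x ∈ grafted n d adj pt
  · rw [reducedParent_of_mem hx]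
  · rw [reducedParent_of_not_mem hx]
    exact hpt x

lemma IsDFSParent.ancestors_subset_reduced (hP : IsDFSParent n adj pt) (hG : IsGraphOn n adj)
    (hd : 3 ≤ d) (x : ℕ) : ancestors pt x ⊆ ancestors (reducedParent n d adj pt) x := by
  refine ancestors_subset_ancestors hP.le_pred (reducedParent_le_pred hP.le_pred) (fun y => ?_) x
  by_cases hy : y ∈ grafted n d adj pt
  · obtain ⟨-, h2, hyn⟩ := grafted_spec hG hP.le_pred hd hy
    have := hP.parent_succ_mem (y - 1) (by omega)
    rwa [Nat.sub_add_cancel (by omega), ← reducedParent_of_mem hy] at this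
  · rw [reducedParent_of_not_mem hy]
    exact mem_ancestors_self pt (pt y)

theorem IsDFSParent.reduced (hP : IsDFSParent n adj pt) (hG : IsGraphOn n adj) (hd : 3 ≤ d) :
    IsDFSParent n (reducedAdj n d adj pt) (reducedParent n d adj pt) where
  le_pred := reducedParent_le_pred hP.le_pred
  adj_parent x hx2 hxn := by
    by_cases hx : x ∈ grafted n d adj pt
    · rw [reducedParent_of_mem hx]
      exact Or.inr (Or.inl ⟨hx, rfl⟩)
    · rw [reducedParent_of_not_mem hx]
      exact Or.inl ⟨hP.adj_parent x hx2 hxn, not_removes_parent hP.le_pred (by omega) hx⟩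
  parent_succ_mem x hx := by
    by_cases hx1 : x + 1 ∈ grafted n d adj pt
    · rw [reducedParent_of_mem hx1, Nat.add_sub_cancel]
      exact mem_ancestors_self _ x
    · rw [reducedParent_of_not_mem hx1]
      exact hP.ancestors_subset_reduced hG hd x (hP.parent_succ_mem x hx)
  closedOff x hx u hu hnot w hw := by
    rcases hw with ⟨hw, -⟩ | ⟨hwg, rfl⟩ | ⟨-, rfl⟩
    · exact hP.closedOff x hx u hu (fun h => hnot (hP.ancestors_subset_reduced hG hd _ h)) w hw
    · have := grafted_spec hG hP.le_pred hd hwg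
      by_contra hlt
      have hw : x + 1 = w := by omega
      rw [hw] at hnot
      exact hnot (reducedParent_of_mem hwg ▸ parent_mem_ancestors _ w)
    · omega

end Reduction

lemma Set.ncard_add_ncard_le_of_subset_diff_union {α : Type*} {s r a t : Set α} (hs : s.Finite)
    (hr : r ⊆ s) (ha : a.Finite) (ht : t ⊆ (s \ r) ∪ a) :
    t.ncard + r.ncard ≤ s.ncard + a.ncard := by
  have := Set.ncard_le_ncard ht (hs.sdiff.union ha)
  have := Set.ncard_union_le (s \ r) a
  have := Set.ncard_sdiff hr (hs.subset hr)
  have := Set.ncard_le_ncard hr hs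
  omega

lemma Set.finite_setOf_and_eq {α : Type*} (p : Prop) (a : α) : {u | p ∧ u = a}.Finite :=
  (Set.finite_singleton a).subset fun _ hu => hu.2

lemma Set.ncard_setOf_and_eq {α : Type*} (p : Prop) (a : α) :
    {u | p ∧ u = a}.ncard = if p then 1 else 0 := by
  by_cases hp : p <;> simp [hp]

section Degree

variable {n d : ℕ} {adj : ℕ → ℕ → Prop} {pt : ℕ → ℕ}

/-- Besides the neighbours in `R`, a grafted `x` trades its tree edge for one to `x - 1`, and `x`
gains an edge to `x + 1` if that vertex is grafted. -/
lemma degree_reducedAdj_add_ncard_le (hG : IsGraphOn n adj) (hpt : ∀ x, pt x ≤ x - 1)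
    (hd : 3 ≤ d) {x : ℕ} {R : Set ℕ} (hR : R ⊆ {u | adj u x ∧ u ≠ pt x})
    (hrem : ∀ u ∈ R, Removes n d adj pt u x ∨ Removes n d adj pt x u) :
    degree (reducedAdj n d adj pt) x + R.ncard ≤
      degree adj x + if x + 1 ∈ grafted n d adj pt then 1 else 0 := by
  unfold degree
  set P := {u | x ∈ grafted n d adj pt ∧ u = pt x}
  have hsub : {u | reducedAdj n d adj pt u x} ⊆ ({u | adj u x} \ (R ∪ P)) ∪
      ({u | x ∈ grafted n d adj pt ∧ u = x - 1} ∪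
        {u | x + 1 ∈ grafted n d adj pt ∧ u = x + 1}) := by
    rintro u (⟨hu, h1, h2⟩ | ⟨hx, rfl⟩ | ⟨hu, rfl⟩)
    · refine Or.inl ⟨hu, ?_⟩
      rintro (hu' | ⟨hx, rfl⟩)
      · exact (hrem u hu').elim h1 h2
      · exact h1 (Or.inl ⟨hx, rfl⟩)
    · exact Or.inr (Or.inl ⟨hx, rfl⟩)
    · have := grafted_spec hG hpt hd hu
      exact Or.inr (Or.inr ⟨by rwa [Nat.sub_add_cancel (by omega)], by omega⟩)
  have hPsub : P ⊆ {u | adj u x} := by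
    rintro _ ⟨hx, rfl⟩
    exact (grafted_spec hG hpt hd hx).1
  have hRfin : R.Finite := (hG.finite_nbrs x).subset fun _ hu => (hR hu).1
  have key := Set.ncard_add_ncard_le_of_subset_diff_union (hG.finite_nbrs x)
    (Set.union_subset (fun _ hu => (hR hu).1) hPsub)
    ((Set.finite_setOf_and_eq _ _).union (Set.finite_setOf_and_eq _ _)) hsub
  have hRP : (R ∪ P).ncard = R.ncard + P.ncard := by
    refine Set.ncard_union_eq (Set.disjoint_left.2 ?_) hRfin (Set.finite_setOf_and_eq _ _)
    rintro _ hu ⟨-, rfl⟩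
    exact (hR hu).2 rfl
  have hA := Set.ncard_union_le {u | x ∈ grafted n d adj pt ∧ u = x - 1}
    {u | x + 1 ∈ grafted n d adj pt ∧ u = x + 1}
  simp only [P, Set.ncard_setOf_and_eq] at key hRP hA
  split_ifs at * <;> omega

variable (hP : IsDFSParent n adj pt) (hG : IsGraphOn n adj) (hd : 3 ≤ d)
include hP hG hd

lemma IsDFSParent.degree_le_ncard_nonTreeNbrs_add_one {x : ℕ}
    (hx : x + 1 ∈ grafted n d adj pt) : degree adj x ≤ (nonTreeNbrs adj pt x).ncard + 1 := by
  have hsub : {u | adj u x} ⊆ insert (pt x) (nonTreeNbrs adj pt x) := by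
    intro u hu
    rw [Set.mem_insert_iff, or_iff_not_imp_left]
    intro hne
    have := hP.lt_of_adj_of_succ_mem_grafted hG hd hx (hG.1 hu)
    have := hP.le_pred u
    exact ⟨hu, hne, by omega⟩
  exact (Set.ncard_le_ncard hsub ((hG.finite_nonTreeNbrs x).insert _)).trans
    (Set.ncard_insert_le _ _)

lemma IsDFSParent.degree_reducedAdj_le_of_mem_treeHubs {x : ℕ}
    (hx : x ∈ treeHubs n d adj pt) : degree (reducedAdj n d adj pt) x ≤ d - 1 := by
  obtain ⟨⟨hadj, hpc⟩, hlt⟩ := lastChild_spec hG hP.le_pred hd hx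
  have hnot : x + 1 ∉ grafted n d adj pt := fun h => by
    have := hP.lt_of_adj_of_succ_mem_grafted hG hd h hadj
    omega
  have key := degree_reducedAdj_add_ncard_le hG hP.le_pred hd (x := x) (R := {lastChild adj pt x})
    (by have := hP.le_pred x; simpa using ⟨hG.1 hadj, by omega⟩)
    (fun u hu => by
      rw [Set.mem_singleton_iff] at hu
      exact hu ▸ Or.inr (Or.inl ⟨lastChild_mem_grafted hG hP.le_pred hd hx, hpc.symm⟩))
  rw [if_neg hnot, Set.ncard_singleton] at key
  have : degree adj x = d := hx.1.2.2
  omega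

lemma IsDFSParent.degree_reducedAdj_le_of_mem_maxDegVerts {x : ℕ}
    (hx : x ∈ maxDegVerts n d adj) (hnh : x ∉ treeHubs n d adj pt) :
    degree (reducedAdj n d adj pt) x ≤ d - 1 := by
  have hne : (nonTreeNbrs adj pt x).Nonempty :=
    Set.nonempty_iff_ne_empty.2 fun h => hnh ⟨hx, h⟩
  have he1 := maxNonTree_mem hG hne
  have hdx : degree adj x = d := hx.2.2
  by_cases hq : x + 1 ∈ grafted n d adj pt
  · have h2 : 1 < (nonTreeNbrs adj pt x).ncard := by
      have := hP.degree_le_ncard_nonTreeNbrs_add_one hG hd hq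
      omega
    have he2 := nextNonTree_mem hG h2
    have key := degree_reducedAdj_add_ncard_le hG hP.le_pred hd
      (R := {maxNonTree adj pt x, nextNonTree adj pt x})
      (by rintro u (rfl | rfl); exacts [⟨he1.1, he1.2.1⟩, ⟨he2.1.1, he2.1.2.1⟩])
      (by
        rintro u (rfl | rfl)
        exacts [Or.inl (Or.inr (Or.inl ⟨hx, he1, Or.inl rfl⟩)),
          Or.inl (Or.inr (Or.inl ⟨hx, he2.1, Or.inr rfl⟩))])
    rw [if_pos hq, Set.ncard_pair (Ne.symm he2.2)] at key
    omega
  · have key := degree_reducedAdj_add_ncard_le hG hP.le_pred hd (R := {maxNonTree adj pt x})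
      (by simpa using ⟨he1.1, he1.2.1⟩)
      (fun u hu => by
        rw [Set.mem_singleton_iff] at hu
        exact hu ▸ Or.inl (Or.inr (Or.inl ⟨hx, he1, Or.inl rfl⟩)))
    rw [if_neg hq, Set.ncard_singleton] at key
    omega

lemma IsDFSParent.degree_reducedAdj_le_of_not_mem_maxDegVerts (hdeg : ∀ v, degree adj v ≤ d)
    {x : ℕ} (hx : x ∉ maxDegVerts n d adj) : degree (reducedAdj n d adj pt) x ≤ d - 1 := by
  have hdx := degree_le_pred_of_not_mem_maxDegVerts hG hdeg hx
  have key₀ := degree_reducedAdj_add_ncard_le hG hP.le_pred hd (x := x) (R := ∅)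
    (Set.empty_subset _) (by simp)
  rw [Set.ncard_empty] at key₀
  by_cases hq : x + 1 ∈ grafted n d adj pt
  · rw [if_pos hq] at key₀
    by_cases hne : (nonTreeNbrs adj pt x).Nonempty
    · have he1 := maxNonTree_mem hG hne
      have key := degree_reducedAdj_add_ncard_le hG hP.le_pred hd (R := {maxNonTree adj pt x})
        (by simpa using ⟨he1.1, he1.2.1⟩)
        (fun u hu => by
          rw [Set.mem_singleton_iff] at hu
          exact hu ▸ Or.inl (Or.inr (Or.inr ⟨hq, he1, rfl⟩)))
      rw [if_pos hq, Set.ncard_singleton] at key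
      omega
    · have := hP.degree_le_ncard_nonTreeNbrs_add_one hG hd hq
      rw [Set.not_nonempty_iff_eq_empty.1 hne, Set.ncard_empty] at this
      omega
  · rw [if_neg hq] at key₀
    omega

theorem IsDFSParent.degree_reducedAdj_le (hdeg : ∀ v, degree adj v ≤ d) (x : ℕ) :
    degree (reducedAdj n d adj pt) x ≤ d - 1 := by
  by_cases hx : x ∈ maxDegVerts n d adj
  · by_cases hh : x ∈ treeHubs n d adj pt
    · exact hP.degree_reducedAdj_le_of_mem_treeHubs hG hd hh
    · exact hP.degree_reducedAdj_le_of_mem_maxDegVerts hG hd hx hh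
  · exact hP.degree_reducedAdj_le_of_not_mem_maxDegVerts hG hd hdeg hx

end Degree

section EdgeDiff

variable {n d : ℕ} {adj : ℕ → ℕ → Prop} {pt : ℕ → ℕ}

lemma finite_chargedEdges (v : ℕ) : (chargedEdges n d adj pt v).Finite := by
  unfold chargedEdges
  split_ifs <;> exact Set.toFinite _

lemma ncard_chargedEdges_le (v : ℕ) : (chargedEdges n d adj pt v).ncard ≤ 3 := by
  unfold chargedEdges
  split_ifs
  · refine (Set.ncard_insert_le _ _).trans (Nat.succ_le_succ ?_)
    exact (Set.ncard_insert_le _ _).trans (by rw [Set.ncard_singleton])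
  · exact (Set.ncard_insert_le _ _).trans (by rw [Set.ncard_singleton]; omega)

lemma Removes.mem_chargedEdges {u w : ℕ} (h : Removes n d adj pt u w) :
    ∃ v ∈ maxDegVerts n d adj, s(u, w) ∈ chargedEdges n d adj pt v := by
  rcases h with ⟨⟨hv, hw⟩, rfl⟩ | ⟨hw, hu, he⟩ | ⟨⟨hv, hw⟩, -, rfl⟩
  · refine ⟨pt w, hv.1, ?_⟩
    rw [chargedEdges, if_pos hv, ← hw]
    exact Or.inl rfl
  · have hnh : w ∉ treeHubs n d adj pt := fun h => by
      rw [h.2] at hu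
      exact hu
    refine ⟨w, hw, ?_⟩
    rw [chargedEdges, if_neg hnh]
    rcases he with rfl | rfl
    exacts [Or.inl rfl, Or.inr rfl]
  · refine ⟨pt (w + 1), hv.1, ?_⟩
    rw [chargedEdges, if_pos hv, ← hw, Nat.add_sub_cancel]
    exact Or.inr (Or.inr rfl)

lemma Grafts.mem_chargedEdges {u w : ℕ} (h : Grafts n d adj pt u w) :
    ∃ v ∈ maxDegVerts n d adj, s(u, w) ∈ chargedEdges n d adj pt v := by
  obtain ⟨⟨hv, hw⟩, rfl⟩ := h
  refine ⟨pt w, hv.1, ?_⟩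
  rw [chargedEdges, if_pos hv, ← hw]
  exact Or.inr (Or.inl rfl)

lemma exists_mem_chargedEdges_of_ne {a b : ℕ}
    (hdiff : ¬(adj a b ↔ reducedAdj n d adj pt a b)) :
    ∃ v ∈ maxDegVerts n d adj, s(a, b) ∈ chargedEdges n d adj pt v := by
  by_cases hab : adj a b
  · have hred : ¬reducedAdj n d adj pt a b := fun h => hdiff ⟨fun _ => h, fun _ => hab⟩
    by_cases h₁ : Removes n d adj pt a b
    · exact h₁.mem_chargedEdges
    by_cases h₂ : Removes n d adj pt b a
    · rw [Sym2.eq_swap]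
      exact h₂.mem_chargedEdges
    exact absurd (Or.inl ⟨hab, h₁, h₂⟩) hred
  · have hred : reducedAdj n d adj pt a b := by
      by_contra h
      exact hdiff ⟨fun h' => absurd h' hab, fun h' => absurd h' h⟩
    rcases hred with ⟨h, -⟩ | h | h
    · exact absurd h hab
    · exact h.mem_chargedEdges
    · rw [Sym2.eq_swap]
      exact h.mem_chargedEdges

/-- Unordered pairs `a < b` embed into `Sym2 ℕ`; each changed edge is charged to a vertex of
degree `d`. -/
theorem edgeDiff_reducedAdj_le :
    edgeDiff adj (reducedAdj n d adj pt) ≤ 3 * (maxDegVerts n d adj).ncard := by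
  set D := {p : ℕ × ℕ | p.1 < p.2 ∧ ¬(adj p.1 p.2 ↔ reducedAdj n d adj pt p.1 p.2)}
  have hVfin : (maxDegVerts n d adj).Finite :=
    (Set.finite_Icc 1 n).subset fun v hv => ⟨hv.1, hv.2.1⟩
  have hinj : Set.InjOn (fun p : ℕ × ℕ => s(p.1, p.2)) D := by
    rintro ⟨a, b⟩ hab ⟨c, e⟩ hce h
    rcases Sym2.eq_iff.1 h with ⟨rfl, rfl⟩ | ⟨rfl, rfl⟩
    · rfl
    · exact absurd (hab.1.trans hce.1) (lt_irrefl _)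
  have hcover : (fun p : ℕ × ℕ => s(p.1, p.2)) '' D ⊆
      ⋃ v ∈ maxDegVerts n d adj, chargedEdges n d adj pt v := by
    rintro _ ⟨⟨a, b⟩, ⟨-, hdiff⟩, rfl⟩
    obtain ⟨v, hv, hmem⟩ := exists_mem_chargedEdges_of_ne hdiff
    exact Set.mem_biUnion hv hmem
  calc edgeDiff adj (reducedAdj n d adj pt) = ((fun p : ℕ × ℕ => s(p.1, p.2)) '' D).ncard :=
        hinj.ncard_image.symm
    _ ≤ (⋃ v ∈ maxDegVerts n d adj, chargedEdges n d adj pt v).ncard :=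
        Set.ncard_le_ncard hcover (hVfin.biUnion fun v _ => finite_chargedEdges v)
    _ ≤ ∑ v ∈ hVfin.toFinset, (chargedEdges n d adj pt v).ncard := by
        simpa using Finset.set_ncard_biUnion_le hVfin.toFinset (chargedEdges n d adj pt)
    _ ≤ hVfin.toFinset.card • 3 := Finset.sum_le_card_nsmul _ _ _ fun v _ => ncard_chargedEdges_le v
    _ = 3 * (maxDegVerts n d adj).ncard := by
        rw [Set.ncard_eq_toFinset_card _ hVfin, smul_eq_mul, mul_comm]

end EdgeDiff

/-- **degree reduction.** If `G` is connected on `{1,…,n}` with maximum degree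
at most `d ≥ 3` and its identity labelling is a valid DFS numbering, then there is a connected
graph `G'` on the same vertex set, of maximum degree at most `d - 1`, whose identity labelling
is a valid DFS numbering and with `|E △ E'| ≤ 3·|V_d|`, where `V_d` is the set of vertices of
degree exactly `d` in `G`. -/
theorem degree_reduction (n d : ℕ) (adj : ℕ → ℕ → Prop) (hG : IsGraphOn n adj)
    (hconn : ConnOn n adj) (hd : 3 ≤ d) (hdeg : ∀ v, degree adj v ≤ d)
    (hvalid : ValidDFS n adj) :
    ∃ adj' : ℕ → ℕ → Prop, IsGraphOn n adj' ∧ ConnOn n adj' ∧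
      (∀ v, degree adj' v ≤ d - 1) ∧ ValidDFS n adj' ∧
      edgeDiff adj adj' ≤ 3 * Set.ncard {v | 1 ≤ v ∧ v ≤ n ∧ degree adj v = d} := by
  obtain ⟨pt, hP⟩ := hvalid.exists_isDFSParent hG hconn
  have hG' := isGraphOn_reducedAdj hG hP.le_pred hd
  have hP' := hP.reduced hG hd
  exact ⟨reducedAdj n d adj pt, hG', hP'.connOn hG', hP.degree_reducedAdj_le hG hd hdeg,
    hP'.validDFS hG', edgeDiff_reducedAdj_le⟩
end

section
/- Let G = (V,E) be an undirected graph on {1,...,n} with maximum degree at most d. If the identity labeling of G is ε-far from a valid DFS numbering when only edge modifications are allowed (every G' = (V,E') of max degree ≤ d for which the identity labeling is a valid DFS numbering has |E △ E'| > εn), then for every graph G' = (V,E') of maximum degree at most d and every bijection ν' : V → {1,...,n} that is a valid DFS numbering of G', we have |E △ E'| + |{v ∈ V : ν'(v) ≠ v}| > (ε/(2d))·n. Conversely, ε-farness under edge-and-label modifications implies ε-farness under edge modifications alone. -/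
open Classical

/-!
A relabelling `ν` of `{1,…,n}` extends to a permutation `σ` of `ℕ` fixing everything else.
Transporting `G'` along `σ` gives a graph with the same degrees for which the identity is a
DFS numbering. It differs from `G'` only in edges at vertices moved by `ν`, at most `2d` per
vertex, so it lies within `|E △ E'| + 2d·|{v : ν v ≠ v}|` of `G`, and the edge-farness of `G`
gives the bound. The converse is the case `ν = id`.
-/

namespace IsGraphOn

variable {n : ℕ} {adj : ℕ → ℕ → Prop}

theorem mem_Icc (hG : IsGraphOn n adj) {u v : ℕ} (h : adj u v) :
    u ∈ Set.Icc 1 n ∧ v ∈ Set.Icc 1 n :=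
  have ⟨hu1, hun, hv1, hvn, _⟩ := hG.2 u v h
  ⟨⟨hu1, hun⟩, ⟨hv1, hvn⟩⟩

theorem finite_neighbors (hG : IsGraphOn n adj) (v : ℕ) : {u | adj u v}.Finite :=
  (Set.finite_Icc 1 n).subset fun _ hu => (hG.mem_Icc hu).1

theorem finite_edgeDiffSet {adj' : ℕ → ℕ → Prop} (hG : IsGraphOn n adj)
    (hG' : IsGraphOn n adj') :
    {p : ℕ × ℕ | p.1 < p.2 ∧ ¬(adj p.1 p.2 ↔ adj' p.1 p.2)}.Finite := by
  refine ((Set.finite_Icc 1 n).prod (Set.finite_Icc 1 n)).subset ?_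
  rintro ⟨x, y⟩ ⟨-, hxy⟩
  by_cases h : adj x y
  · exact hG.mem_Icc h
  · exact hG'.mem_Icc (by tauto)

end IsGraphOn

theorem edgeDiff_le_add {n : ℕ} {a b c : ℕ → ℕ → Prop} (ha : IsGraphOn n a)
    (hb : IsGraphOn n b) (hc : IsGraphOn n c) :
    edgeDiff a c ≤ edgeDiff a b + edgeDiff b c := by
  refine (Set.ncard_le_ncard ?_ ((ha.finite_edgeDiffSet hb).union
    (hb.finite_edgeDiffSet hc))).trans (Set.ncard_union_le _ _)
  rintro p ⟨hp, hac⟩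
  by_cases hab : a p.1 p.2 ↔ b p.1 p.2
  · exact Or.inr ⟨hp, by rwa [← hab]⟩
  · exact Or.inl ⟨hp, hab⟩

/-- Every differing pair has an endpoint `v ∈ S`, and is then determined by its other endpoint,
a neighbour of `v` in one of the two graphs. -/
theorem edgeDiff_le_of_agree_off {n d : ℕ} {a b : ℕ → ℕ → Prop} {S : Set ℕ}
    (ha : IsGraphOn n a) (hb : IsGraphOn n b)
    (hda : ∀ v, degree a v ≤ d) (hdb : ∀ v, degree b v ≤ d) (hS : S.Finite)
    (hagree : ∀ x y, x ∉ S → y ∉ S → (a x y ↔ b x y)) :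
    edgeDiff a b ≤ 2 * d * S.ncard := by
  set N : ℕ → Set ℕ := fun v => {u | a u v} ∪ {u | b u v}
  set pair : ℕ → ℕ → ℕ × ℕ := fun v u => (min u v, max u v)
  have hcover : {p : ℕ × ℕ | p.1 < p.2 ∧ ¬(a p.1 p.2 ↔ b p.1 p.2)} ⊆
      ⋃ v ∈ hS.toFinset, pair v '' N v := by
    rintro ⟨x, y⟩ ⟨hxy, hne⟩
    have hedge : a x y ∨ b x y := by tauto
    simp only [Set.mem_iUnion, Set.Finite.mem_toFinset]
    by_cases hx : x ∈ S
    · refine ⟨x, hx, y, ?_, by simp [pair, hxy.le]⟩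
      rcases hedge with h | h
      · exact Or.inl (ha.1 h)
      · exact Or.inr (hb.1 h)
    · have hy : y ∈ S := by_contra fun hy => hne (hagree x y hx hy)
      exact ⟨y, hy, x, hedge, by simp [pair, hxy.le]⟩
  have hfin : (⋃ v ∈ hS.toFinset, pair v '' N v).Finite :=
    Set.Finite.biUnion (Finset.finite_toSet _) fun v _ =>
      ((ha.finite_neighbors v).union (hb.finite_neighbors v)).image _
  have hpiece : ∀ v, (pair v '' N v).ncard ≤ 2 * d := fun v =>
    calc (pair v '' N v).ncard ≤ (N v).ncard :=
          Set.ncard_image_le ((ha.finite_neighbors v).union (hb.finite_neighbors v))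
      _ ≤ degree a v + degree b v := Set.ncard_union_le _ _
      _ ≤ 2 * d := by linarith [hda v, hdb v]
  calc edgeDiff a b ≤ (⋃ v ∈ hS.toFinset, pair v '' N v).ncard := Set.ncard_le_ncard hcover hfin
    _ ≤ ∑ v ∈ hS.toFinset, (pair v '' N v).ncard := Finset.set_ncard_biUnion_le _ _
    _ ≤ ∑ _v ∈ hS.toFinset, 2 * d := Finset.sum_le_sum fun v _ => hpiece v
    _ = 2 * d * S.ncard := by
      rw [Finset.sum_const, smul_eq_mul, mul_comm, Set.ncard_eq_toFinset_card S hS]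

theorem Equiv.Perm.apply_mem_of_fixed_off {α : Type*} {s : Set α} {σ : Equiv.Perm α}
    (hσ : ∀ v ∉ s, σ v = v) {v : α} (hv : v ∈ s) : σ v ∈ s := by
  by_contra h
  have hfix := σ.injective (hσ _ h)
  rw [hfix] at h
  exact h hv

theorem Set.BijOn.exists_perm_eqOn {α : Type*} {s : Set α} {ν : α → α} (hν : Set.BijOn ν s s) :
    ∃ σ : Equiv.Perm α, Set.EqOn ν σ s ∧ ∀ v ∉ s, σ v = v :=
  ⟨Equiv.Perm.ofSubtype (hν.equiv ν),
    fun v hv => by rw [Equiv.Perm.ofSubtype_apply_of_mem _ hv]; rfl,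
    fun _ hv => Equiv.Perm.ofSubtype_apply_of_not_mem _ hv⟩

def relabel (σ : Equiv.Perm ℕ) (adj : ℕ → ℕ → Prop) : ℕ → ℕ → Prop :=
  fun x y => adj (σ.symm x) (σ.symm y)

section Relabel

variable {n : ℕ} {adj : ℕ → ℕ → Prop} {σ : Equiv.Perm ℕ}

theorem degree_relabel (σ : Equiv.Perm ℕ) (adj : ℕ → ℕ → Prop) (v : ℕ) :
    degree (relabel σ adj) v = degree adj (σ.symm v) := by
  rw [degree, degree, ← Set.ncard_image_of_injective {u | adj u (σ.symm v)} σ.injective,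
    Equiv.image_eq_preimage_symm]
  rfl

theorem IsGraphOn.relabel (hG : IsGraphOn n adj) (hσ : ∀ v ∉ Set.Icc 1 n, σ v = v) :
    IsGraphOn n (relabel σ adj) := by
  refine ⟨fun x y h => hG.1 h, fun x y h => ?_⟩
  have hx := σ.apply_symm_apply x ▸ σ.apply_mem_of_fixed_off hσ (hG.mem_Icc h).1
  have hy := σ.apply_symm_apply y ▸ σ.apply_mem_of_fixed_off hσ (hG.mem_Icc h).2
  exact ⟨hx.1, hx.2, hy.1, hy.2, fun hxy => (hG.2 _ _ h).2.2.2.2 (congrArg σ.symm hxy)⟩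

def relabelState (σ : Equiv.Perm ℕ) (s : List (ℕ × ℕ) × List ℕ) : List (ℕ × ℕ) × List ℕ :=
  (s.1.map (Prod.map σ σ), s.2.map σ)

theorem DFSStep.relabel (hσ : ∀ v ∉ Set.Icc 1 n, σ v = v) {s t : List (ℕ × ℕ) × List ℕ}
    (h : DFSStep n adj s t) :
    DFSStep n (relabel σ adj) (relabelState σ s) (relabelState σ t) := by
  have hfst : ∀ (order : List (ℕ × ℕ)) (v : ℕ),
      σ v ∈ (order.map (Prod.map σ σ)).map Prod.fst ↔ v ∈ order.map Prod.fst := by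
    intro order v
    rw [List.map_map, show Prod.fst ∘ Prod.map σ σ = σ ∘ Prod.fst from rfl, ← List.map_map,
      List.mem_map_of_injective σ.injective]
  cases h with
  | root v order hv1 hv2 hnd =>
    have h0 : σ 0 = 0 := hσ 0 (by simp)
    obtain ⟨hσv1, hσv2⟩ := σ.apply_mem_of_fixed_off hσ ⟨hv1, hv2⟩
    simpa [relabelState, h0] using DFSStep.root (adj := _root_.relabel σ adj) (σ v)
      (order.map (Prod.map σ σ)) hσv1 hσv2 (by rwa [hfst])
  | descend v t order stack hadj hnd =>
    simpa [relabelState] using DFSStep.descend (σ v) (σ t) (order.map (Prod.map σ σ))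
      (stack.map σ) (by simpa [_root_.relabel] using hadj) (by rwa [hfst])
  | backtrack t order stack hall =>
    refine DFSStep.backtrack (σ t) (order.map (Prod.map σ σ)) (stack.map σ) fun u hu => ?_
    rw [← σ.apply_symm_apply u, hfst]
    exact hall _ (by simpa [_root_.relabel] using hu)

theorem DFSRun.relabel (hσ : ∀ v ∉ Set.Icc 1 n, σ v = v) {order : List (ℕ × ℕ)}
    (h : DFSRun n adj order) : DFSRun n (relabel σ adj) (order.map (Prod.map σ σ)) :=
  h.lift (relabelState σ) fun _ _ hst => hst.relabel hσ

theorem DFSRun.mem_Icc (hG : IsGraphOn n adj) {order : List (ℕ × ℕ)}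
    (h : DFSRun n adj order) : ∀ v ∈ order.map Prod.fst, v ∈ Set.Icc 1 n := by
  suffices ∀ s, Relation.ReflTransGen (DFSStep n adj) ([], []) s →
      ∀ v ∈ s.1.map Prod.fst, v ∈ Set.Icc 1 n from this _ h
  intro s hs
  induction hs with
  | refl => simp
  | tail _ hstep ih =>
    cases hstep with
    | root v order hv1 hv2 =>
      simp only [List.map_append, List.map_cons, List.map_nil, List.mem_append,
        List.mem_singleton]
      rintro w (hw | rfl)
      exacts [ih w hw, ⟨hv1, hv2⟩]
    | descend v t order stack hadj =>
      simp only [List.map_append, List.map_cons, List.map_nil, List.mem_append,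
        List.mem_singleton]
      rintro w (hw | rfl)
      exacts [ih w hw, (hG.mem_Icc hadj).2]
    | backtrack => exact ih

theorem ValidDFSLabel.congr (hG : IsGraphOn n adj) {f g : ℕ → ℕ}
    (hfg : Set.EqOn f g (Set.Icc 1 n)) (h : ValidDFSLabel n adj f) : ValidDFSLabel n adj g := by
  obtain ⟨order, hrun, hf⟩ := h
  refine ⟨order, hrun, ?_⟩
  rw [← hf, List.map_inj_left]
  exact fun v hv => (hfg (hrun.mem_Icc hG v hv)).symm

theorem ValidDFSLabel.relabel (hσ : ∀ v ∉ Set.Icc 1 n, σ v = v)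
    (h : ValidDFSLabel n adj σ) : ValidDFS n (relabel σ adj) := by
  obtain ⟨order, hrun, hσ'⟩ := h
  refine ⟨_, hrun.relabel hσ, ?_⟩
  simpa [Function.comp_def] using hσ'

end Relabel

theorem label_edits_vs_edge_edits_general (n d : ℕ) (adj : ℕ → ℕ → Prop) (ε : ℝ)
    (hG : IsGraphOn n adj) (hd : 0 < d) :
    ((∀ adj' : ℕ → ℕ → Prop, IsGraphOn n adj' → (∀ v, degree adj' v ≤ d) →
        ValidDFS n adj' → ε * n < (edgeDiff adj adj' : ℝ)) →
      ∀ (adj' : ℕ → ℕ → Prop) (ν : ℕ → ℕ), IsGraphOn n adj' →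
        (∀ v, degree adj' v ≤ d) → Set.BijOn ν (Set.Icc 1 n) (Set.Icc 1 n) →
        ValidDFSLabel n adj' ν →
        ε / (2 * d) * n <
          (edgeDiff adj adj' : ℝ) +
            (Set.ncard {v | 1 ≤ v ∧ v ≤ n ∧ ν v ≠ v} : ℝ)) ∧
    ((∀ (adj' : ℕ → ℕ → Prop) (ν : ℕ → ℕ), IsGraphOn n adj' →
        (∀ v, degree adj' v ≤ d) → Set.BijOn ν (Set.Icc 1 n) (Set.Icc 1 n) →
        ValidDFSLabel n adj' ν →
        ε * n <
          (edgeDiff adj adj' : ℝ) +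
            (Set.ncard {v | 1 ≤ v ∧ v ≤ n ∧ ν v ≠ v} : ℝ)) →
      ∀ adj' : ℕ → ℕ → Prop, IsGraphOn n adj' → (∀ v, degree adj' v ≤ d) →
        ValidDFS n adj' → ε * n < (edgeDiff adj adj' : ℝ)) := by
  refine ⟨fun hfar adj' ν hG' hdeg' hν hvalid => ?_, fun hfar adj' hG' hdeg' hvalid => ?_⟩
  · obtain ⟨σ, hνσ, hσ⟩ := hν.exists_perm_eqOn
    set moved := {v | 1 ≤ v ∧ v ≤ n ∧ ν v ≠ v}
    have hfixed : ∀ v ∉ moved, σ.symm v = v := by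
      intro v hv
      rw [σ.symm_apply_eq, eq_comm]
      by_cases hv' : v ∈ Set.Icc 1 n
      · rw [← hνσ hv']
        by_contra h
        exact hv ⟨hv'.1, hv'.2, h⟩
      · exact hσ v hv'
    have hσG := hG'.relabel hσ
    have hσdeg : ∀ v, degree (relabel σ adj') v ≤ d := fun v =>
      (degree_relabel σ adj' v).trans_le (hdeg' _)
    have hfar' : ε * n < edgeDiff adj (relabel σ adj') :=
      hfar _ hσG hσdeg ((hvalid.congr hG' hνσ).relabel hσ)
    have hsim : edgeDiff adj' (relabel σ adj') ≤ 2 * d * moved.ncard :=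
      edgeDiff_le_of_agree_off hG' hσG hdeg' hσdeg
        ((Set.finite_Icc 1 n).subset fun v hv => ⟨hv.1, hv.2.1⟩)
        fun x y hx hy => by simp only [relabel, hfixed x hx, hfixed y hy]
    have hsum : edgeDiff adj (relabel σ adj') ≤ 2 * d * (edgeDiff adj adj' + moved.ncard) := by
      nlinarith [edgeDiff_le_add hG hG' hσG]
    rw [div_mul_eq_mul_div, div_lt_iff₀ (by positivity)]
    have hsumℝ : (edgeDiff adj (relabel σ adj') : ℝ) ≤
        2 * d * (edgeDiff adj adj' + moved.ncard) := by exact_mod_cast hsum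
    linarith
  · simpa using hfar adj' id hG' hdeg' (Set.bijOn_id _) hvalid

/-- For a graph `G` of maximum degree at most `d` on `{1,…,n}`:
(1) if the identity labelling is `ε`-far from a valid DFS numbering under edge modifications
only, then for every graph `G'` of max degree ≤ `d` and every bijection `ν'` of `{1,…,n}`
that is a valid DFS numbering of `G'` we have
`|E △ E'| + |{v : ν'(v) ≠ v}| > (ε/(2d))·n`; and
(2) conversely, `ε`-farness under edge-and-label modifications implies `ε`-farness under edge
modifications alone. -/
theorem label_edits_vs_edge_edits (n d : ℕ) (adj : ℕ → ℕ → Prop) (ε : ℝ)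
    (hG : IsGraphOn n adj) (hd : 0 < d) (hdeg : ∀ v, degree adj v ≤ d) :
    ((∀ adj' : ℕ → ℕ → Prop, IsGraphOn n adj' → (∀ v, degree adj' v ≤ d) →
        ValidDFS n adj' → ε * n < (edgeDiff adj adj' : ℝ)) →
      ∀ (adj' : ℕ → ℕ → Prop) (ν : ℕ → ℕ), IsGraphOn n adj' →
        (∀ v, degree adj' v ≤ d) → Set.BijOn ν (Set.Icc 1 n) (Set.Icc 1 n) →
        ValidDFSLabel n adj' ν →
        ε / (2 * d) * n <
          (edgeDiff adj adj' : ℝ) +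
            (Set.ncard {v | 1 ≤ v ∧ v ≤ n ∧ ν v ≠ v} : ℝ)) ∧
    ((∀ (adj' : ℕ → ℕ → Prop) (ν : ℕ → ℕ), IsGraphOn n adj' →
        (∀ v, degree adj' v ≤ d) → Set.BijOn ν (Set.Icc 1 n) (Set.Icc 1 n) →
        ValidDFSLabel n adj' ν →
        ε * n <
          (edgeDiff adj adj' : ℝ) +
            (Set.ncard {v | 1 ≤ v ∧ v ≤ n ∧ ν v ≠ v} : ℝ)) →
      ∀ adj' : ℕ → ℕ → Prop, IsGraphOn n adj' → (∀ v, degree adj' v ≤ d) →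
        ValidDFS n adj' → ε * n < (edgeDiff adj adj' : ℝ)) :=
  label_edits_vs_edge_edits_general n d adj ε hG hd
end

section
/- Let G = (V,E) be an undirected graph on {1,...,n}. The identity labeling is a valid FIN numbering of G (the order in which vertices finish in some DFS run) if and only if there is no FIN-conflicting pair, i.e., no v ∈ V and edge {u,w} ∈ E with w < v < u < p_FIN(v), where p_FIN(v) = min{u ∈ N(v) : u > v} if this set is nonempty and p_FIN(v) = ∞ otherwise. -/
open Classical

/-- One step of a depth-first search that also records the finishing order.  The state is
`(disc, fin, stack)`: discovered vertices in discovery order, finished vertices in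
finishing order, and the stack of active vertices (top first). -/
inductive FINStep (n : ℕ) (adj : ℕ → ℕ → Prop) :
    List ℕ × List ℕ × List ℕ → List ℕ × List ℕ × List ℕ → Prop
  | root (v : ℕ) (disc fin : List ℕ) (hv1 : 1 ≤ v) (hv2 : v ≤ n) (hnd : v ∉ disc) :
      FINStep n adj (disc, fin, []) (disc ++ [v], fin, [v])
  | descend (v t : ℕ) (disc fin : List ℕ) (stack : List ℕ)
      (hadj : adj t v) (hnd : v ∉ disc) :
      FINStep n adj (disc, fin, t :: stack) (disc ++ [v], fin, v :: t :: stack)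
  | backtrack (t : ℕ) (disc fin : List ℕ) (stack : List ℕ)
      (hall : ∀ u, adj t u → u ∈ disc) :
      FINStep n adj (disc, fin, t :: stack) (disc, fin ++ [t], stack)

/-- The identity labelling on `{1,…,n}` is a valid FIN numbering: some DFS run finishes
the vertices exactly in the order `1, 2, …, n`. -/
def ValidFIN (n : ℕ) (adj : ℕ → ℕ → Prop) : Prop :=
  ∃ disc, Relation.ReflTransGen (FINStep n adj)
    (([], [], []) : List ℕ × List ℕ × List ℕ) (disc, List.range' 1 n, [])

/-- `p_FIN(v)`: the smallest neighbour of `v` larger than `v`, with the sentinel value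
`n + 1` (playing the role of `∞`) if no neighbour of `v` exceeds `v`. -/
noncomputable def parFIN (n : ℕ) (adj : ℕ → ℕ → Prop) (v : ℕ) : ℕ :=
  if ∃ u, adj u v ∧ v < u then sInf {u | adj u v ∧ v < u} else n + 1

/-- A FIN-conflicting pair `(v, {u,w})`: `{u,w} ∈ E` and `w < v < u < p_FIN(v)`. -/
def FINConflict (n : ℕ) (adj : ℕ → ℕ → Prop) (v u w : ℕ) : Prop :=
  adj u w ∧ w < v ∧ v < u ∧ u < parFIN n adj v

/-!
If the identity is a FIN numbering, look at the moment a vertex `v` finishes. The vertices below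
`v` on the stack finish later, top first, so they exceed `v` and increase downwards. A finished
`w < v` has all its neighbours discovered, so a neighbour `u > v` of `w` is still on the stack
below `v`; the vertex directly below `v` is then a neighbour of `v` in `(v, u]`, whence
`p_FIN(v) ≤ u`.

Conversely, without conflicting pairs a search can be run in which the stack, just before `v`
finishes, is the chain `v, p_FIN(v), p_FIN(p_FIN(v)), …`: every larger neighbour of `v` lies on
this chain, and the chain of `v + 1` ends with the chain of `p_FIN(v)`, so after `v` finishes the
missing front part of the chain of `v + 1` can be pushed.
-/

open Relation

variable {n : ℕ} {adj : ℕ → ℕ → Prop}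

theorem Relation.ReflTransGen.exists_crossing_step {α : Type*} {r : α → α → Prop}
    {P : α → Prop} {a b : α} (h : ReflTransGen r a b) (ha : ¬P a) (hb : P b) :
    ∃ c d, ReflTransGen r a c ∧ r c d ∧ ReflTransGen r d b ∧ ¬P c ∧ P d := by
  induction h with
  | refl => exact absurd hb ha
  | @tail c b hac hcb ih =>
    by_cases hc : P c
    · obtain ⟨x, y, hax, hxy, hyc, hx, hy⟩ := ih hc
      exact ⟨x, y, hax, hxy, hyc.tail hcb, hx, hy⟩
    · exact ⟨c, b, hac, hcb, .refl, hc, hb⟩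

lemma lt_parFIN {v : ℕ} (h : v ≤ n) : v < parFIN n adj v := by
  unfold parFIN
  split_ifs with hex
  · exact (Nat.sInf_mem hex).2
  · omega

lemma parFIN_le {u v : ℕ} (h : adj u v) (hvu : v < u) : parFIN n adj v ≤ u := by
  rw [parFIN, if_pos ⟨u, h, hvu⟩]
  exact Nat.sInf_le ⟨h, hvu⟩

lemma adj_parFIN {v : ℕ} (h : parFIN n adj v ≤ n) : adj (parFIN n adj v) v := by
  unfold parFIN at h ⊢
  split_ifs at h ⊢ with hex
  · exact (Nat.sInf_mem hex).1
  · omega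

/-- The stack just before `v` finishes, in the search built when there is no FIN-conflicting
pair. -/
noncomputable def finChain (n : ℕ) (adj : ℕ → ℕ → Prop) (v : ℕ) : List ℕ :=
  if h : v ≤ n then v :: finChain n adj (parFIN n adj v) else []
  termination_by n + 1 - v
  decreasing_by have := lt_parFIN (adj := adj) h; omega

lemma finChain_of_le {v : ℕ} (h : v ≤ n) :
    finChain n adj v = v :: finChain n adj (parFIN n adj v) := by
  rw [finChain, dif_pos h]

lemma finChain_of_lt {v : ℕ} (h : n < v) : finChain n adj v = [] := by
  rw [finChain, dif_neg (by omega)]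

lemma bounds_of_mem_finChain {v x : ℕ} (hx : x ∈ finChain n adj v) : v ≤ x ∧ x ≤ n := by
  by_cases h : v ≤ n
  · rw [finChain_of_le h, List.mem_cons] at hx
    rcases hx with rfl | hx
    · exact ⟨le_rfl, h⟩
    · have := bounds_of_mem_finChain hx
      have := lt_parFIN (adj := adj) h
      omega
  · simp [finChain_of_lt (not_le.mp h)] at hx
  termination_by n + 1 - v
  decreasing_by have := lt_parFIN (adj := adj) h; omega

lemma pairwise_finChain (v : ℕ) : (finChain n adj v).Pairwise (· < ·) := by
  by_cases h : v ≤ n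
  · rw [finChain_of_le h, List.pairwise_cons]
    refine ⟨fun x hx => ?_, pairwise_finChain _⟩
    exact (lt_parFIN h).trans_le (bounds_of_mem_finChain hx).1
  · simp [finChain_of_lt (not_le.mp h)]
  termination_by n + 1 - v
  decreasing_by have := lt_parFIN (adj := adj) h; omega

lemma nodup_finChain (v : ℕ) : (finChain n adj v).Nodup :=
  (pairwise_finChain v).imp Nat.ne_of_lt

lemma isChain_finChain (v : ℕ) : (finChain n adj v).IsChain (fun x y => adj y x) := by
  by_cases h : v ≤ n
  · rw [finChain_of_le h]
    refine (isChain_finChain _).cons fun b hb => ?_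
    by_cases hpar : parFIN n adj v ≤ n
    · rw [finChain_of_le hpar, List.head?_cons, Option.mem_some_iff] at hb
      exact hb ▸ adj_parFIN hpar
    · simp [finChain_of_lt (not_le.mp hpar)] at hb
  · simp [finChain_of_lt (not_le.mp h)]
  termination_by n + 1 - v
  decreasing_by have := lt_parFIN (adj := adj) h; omega

/-- Without conflicting pairs, the chain from `x` climbs through every neighbour `u ≥ x` of
a vertex `w ≤ x`: each step `x ↦ p_FIN(x)` stays `≤ u`, or `(x, {u, w})` would conflict. -/
lemma finChain_suffix_of_adj (hnc : ¬∃ v u w, FINConflict n adj v u w) {u w x : ℕ}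
    (hadj : adj u w) (hwx : w ≤ x) (hxu : x ≤ u) : finChain n adj u <:+ finChain n adj x := by
  obtain rfl | hxu := hxu.eq_or_lt
  · exact List.suffix_refl _
  by_cases hxn : x ≤ n
  · have hpar : parFIN n adj x ≤ u := by
      by_contra! hlt
      obtain rfl | hwx := hwx.eq_or_lt
      · exact hlt.not_ge (parFIN_le hadj hxu)
      · exact hnc ⟨x, u, w, hadj, hwx, hxu, hlt⟩
    have := lt_parFIN (adj := adj) hxn
    rw [finChain_of_le hxn]
    exact (finChain_suffix_of_adj hnc hadj (by omega) hpar).trans (List.suffix_cons _ _)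
  · rw [finChain_of_lt (by omega), finChain_of_lt (by omega)]
  termination_by u - x
  decreasing_by have := lt_parFIN (adj := adj) hxn; omega

lemma mem_finChain_of_adj (hG : IsGraphOn n adj) (hnc : ¬∃ v u w, FINConflict n adj v u w)
    {u v : ℕ} (hadj : adj u v) (hvu : v < u) : u ∈ finChain n adj v := by
  refine (finChain_suffix_of_adj hnc hadj le_rfl hvu.le).subset ?_
  rw [finChain_of_le (hG.2 u v hadj).2.1]
  exact List.mem_cons_self

lemma finChain_parFIN_suffix (hnc : ¬∃ v u w, FINConflict n adj v u w) {w : ℕ} (hw : w ≤ n) :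
    finChain n adj (parFIN n adj w) <:+ finChain n adj (w + 1) := by
  by_cases hpar : parFIN n adj w ≤ n
  · exact finChain_suffix_of_adj hnc (adj_parFIN hpar) w.le_succ (lt_parFIN hw)
  · rw [finChain_of_lt (not_le.mp hpar)]
    exact List.nil_suffix

lemma FINStep.push {disc fin stack : List ℕ} {a : ℕ}
    (hchain : (a :: stack).IsChain (fun x y => adj y x)) (ha : a ∉ disc) (ha₁ : 1 ≤ a)
    (haₙ : a ≤ n) : FINStep n adj (disc, fin, stack) (disc ++ [a], fin, a :: stack) := by
  cases stack with
  | nil => exact .root a disc fin ha₁ haₙ ha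
  | cons t stack => exact .descend a t disc fin stack (List.isChain_cons_cons.mp hchain).1 ha

lemma reflTransGen_push {disc fin stack p : List ℕ}
    (hchain : (p ++ stack).IsChain (fun x y => adj y x)) (hnd : p.Nodup)
    (hdisc : ∀ x ∈ p, x ∉ disc) (hbounds : ∀ x ∈ p, 1 ≤ x ∧ x ≤ n) :
    ReflTransGen (FINStep n adj) (disc, fin, stack) (disc ++ p.reverse, fin, p ++ stack) := by
  induction p with
  | nil => simpa using ReflTransGen.refl
  | cons a p ih =>
    rw [List.nodup_cons] at hnd
    refine (ih hchain.tail hnd.2 (fun x hx => hdisc x (.tail a hx))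
      (fun x hx => hbounds x (.tail a hx))).tail ?_
    rw [List.reverse_cons, ← List.append_assoc]
    have ha : a ∉ disc ++ p.reverse := by
      simpa [not_or] using ⟨hdisc a List.mem_cons_self, hnd.1⟩
    exact FINStep.push hchain ha (hbounds a List.mem_cons_self).1 (hbounds a List.mem_cons_self).2

structure FINInvariant (adj : ℕ → ℕ → Prop) (s : List ℕ × List ℕ × List ℕ) :
    Prop where
  mem_disc_iff : ∀ x, x ∈ s.1 ↔ x ∈ s.2.1 ∨ x ∈ s.2.2
  adj_mem_disc : ∀ x ∈ s.2.1, ∀ u, adj x u → u ∈ s.1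
  isChain_stack : s.2.2.IsChain (fun x y => adj y x)

lemma FINInvariant.step {s s' : List ℕ × List ℕ × List ℕ} (hI : FINInvariant adj s)
    (h : FINStep n adj s s') : FINInvariant adj s' := by
  obtain ⟨hdisc, hadj, hchain⟩ := hI
  cases h with
  | root v disc fin =>
    refine ⟨fun x => ?_, fun x hx u hu => List.mem_append_left _ (hadj x hx u hu), .singleton v⟩
    simp only [List.mem_append, List.mem_cons, hdisc x]
    tauto
  | descend v t disc fin stack htv =>
    refine ⟨fun x => ?_, fun x hx u hu => List.mem_append_left _ (hadj x hx u hu),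
      hchain.cons_cons htv⟩
    simp only [List.mem_append, List.mem_cons, hdisc x]
    tauto
  | backtrack t disc fin stack hall =>
    refine ⟨fun x => ?_, fun x hx u hu => ?_, hchain.tail⟩
    · simp only [List.mem_append, List.mem_cons, hdisc x]
      tauto
    · rcases List.mem_append.mp hx with hx | hx
      · exact hadj x hx u hu
      · exact hall u (List.mem_singleton.mp hx ▸ hu)

lemma FINInvariant.of_reflTransGen {s : List ℕ × List ℕ × List ℕ}
    (h : ReflTransGen (FINStep n adj) ([], [], []) s) : FINInvariant adj s := by
  induction h with
  | refl => exact ⟨by simp, by simp, .nil⟩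
  | tail _ hstep ih => exact ih.step hstep

lemma exists_stack_sublist_of_reflTransGen {s : List ℕ × List ℕ × List ℕ}
    {disc fin : List ℕ}
    (h : ReflTransGen (FINStep n adj) s (disc, fin, [])) :
    ∃ rest, fin = s.2.1 ++ rest ∧ s.2.2.Sublist rest := by
  induction h using ReflTransGen.head_induction_on with
  | refl => exact ⟨[], by simp, .refl _⟩
  | head hstep _ ih =>
    obtain ⟨rest, hfin, hsub⟩ := ih
    cases hstep with
    | root => exact ⟨rest, hfin, List.nil_sublist _⟩
    | descend v t disc fin stack => exact ⟨rest, hfin, (List.sublist_cons_self v _).trans hsub⟩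
    | backtrack t => exact ⟨t :: rest, by simpa using hfin, hsub.cons_cons t⟩

lemma parFIN_le_of_mem_stack {v u : ℕ} {stack : List ℕ}
    (hchain : (v :: stack).IsChain (fun x y => adj y x)) (hsorted : (v :: stack).Pairwise (· < ·))
    (hu : u ∈ stack) : parFIN n adj v ≤ u := by
  obtain ⟨t, stack, rfl⟩ := List.exists_cons_of_ne_nil (List.ne_nil_of_mem hu)
  rw [List.pairwise_cons, List.pairwise_cons] at hsorted
  have htu : t ≤ u := by
    rcases List.mem_cons.mp hu with rfl | hu
    · exact le_rfl
    · exact (hsorted.2.1 u hu).le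
  exact (parFIN_le (List.isChain_cons_cons.mp hchain).1 (hsorted.1 t List.mem_cons_self)).trans htu

theorem not_finConflict_of_validFIN (hG : IsGraphOn n adj) (hvalid : ValidFIN n adj)
    {v u w : ℕ} : ¬FINConflict n adj v u w := by
  rintro ⟨huw, hwv, hvu, hupar⟩
  obtain ⟨disc, hrun⟩ := hvalid
  have := hG.2 u w huw
  obtain ⟨c, d, hc, hcd, hd, hvc, hvd⟩ := hrun.exists_crossing_step (P := fun s => v ∈ s.2.1)
    (by simp) (by simp only [List.mem_range'_1]; omega)
  cases hcd with
  | root => exact hvc hvd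
  | descend => exact hvc hvd
  | backtrack t disc₀ fin₀ stack =>
    obtain rfl : v = t := by simpa [hvc] using hvd
    obtain ⟨hdisc, hadj, hchain⟩ := FINInvariant.of_reflTransGen hc
    obtain ⟨rest, hfin, hsub⟩ := exists_stack_sublist_of_reflTransGen hd
    simp only [List.append_assoc, List.singleton_append] at hfin hsub hdisc hadj hchain
    have hsorted : (fin₀ ++ v :: rest).Pairwise (· < ·) := hfin ▸ List.pairwise_lt_range'
    obtain ⟨-, hv_rest, hfin_lt⟩ := List.pairwise_append.mp hsorted
    have hw : w ∈ fin₀ := by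
      have hw : w ∈ fin₀ ++ v :: rest := by rw [← hfin, List.mem_range'_1]; omega
      rw [List.mem_append, List.mem_cons] at hw
      rcases hw with hw | hwv' | hw
      · exact hw
      · omega
      · have := (List.pairwise_cons.mp hv_rest).1 w hw; omega
    have hu : u ∈ stack := by
      have hu := (hdisc u).mp (hadj w hw u (hG.1 huw))
      rw [List.mem_cons] at hu
      rcases hu with hu | huv | hu
      · have := hfin_lt u hu v List.mem_cons_self; omega
      · omega
      · exact hu
    exact hupar.not_ge (parFIN_le_of_mem_stack hchain (hv_rest.sublist (hsub.cons_cons v)) hu)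

lemma mem_range_or_finChain_of_adj (hG : IsGraphOn n adj)
    (hnc : ¬∃ v u w, FINConflict n adj v u w) {v u : ℕ} (hadj : adj (v + 1) u) :
    u ∈ List.range' 1 v ∨ u ∈ finChain n adj (v + 1) := by
  obtain ⟨-, -, hu, -, hne⟩ := hG.2 _ _ hadj
  rcases Nat.lt_or_gt_of_ne hne with hlt | hlt
  · exact .inr (mem_finChain_of_adj hG hnc (hG.1 hadj) hlt)
  · exact .inl (List.mem_range'_1.mpr (by omega))

lemma reflTransGen_finish_succ (hG : IsGraphOn n adj) (hnc : ¬∃ v u w, FINConflict n adj v u w)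
    {v : ℕ} (hv : v + 1 ≤ n) {disc : List ℕ} (hrun : ReflTransGen (FINStep n adj) ([], [], [])
      (disc, List.range' 1 v, finChain n adj (v + 1))) :
    ∃ disc', ReflTransGen (FINStep n adj) (disc, List.range' 1 v, finChain n adj (v + 1))
      (disc', List.range' 1 (v + 1), finChain n adj (v + 2)) := by
  have hdisc : ∀ x, x ∈ disc ↔ x ∈ List.range' 1 v ∨ x ∈ finChain n adj (v + 1) :=
    (FINInvariant.of_reflTransGen hrun).mem_disc_iff
  have hback : FINStep n adj (disc, List.range' 1 v, finChain n adj (v + 1))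
      (disc, List.range' 1 (v + 1), finChain n adj (parFIN n adj (v + 1))) := by
    rw [List.range'_1_concat, Nat.add_comm 1 v, finChain_of_le hv]
    exact .backtrack _ _ _ _ fun u hu => (hdisc u).mpr (mem_range_or_finChain_of_adj hG hnc hu)
  obtain ⟨p, hp⟩ := finChain_parFIN_suffix hnc hv
  have hnd := nodup_finChain (n := n) (adj := adj) (v + 1 + 1)
  rw [← hp, List.nodup_append] at hnd
  have hbounds (x : ℕ) (hx : x ∈ p) : v + 2 ≤ x ∧ x ≤ n :=
    bounds_of_mem_finChain (hp ▸ List.mem_append_left _ hx)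
  have hfresh (x : ℕ) (hx : x ∈ p) : x ∉ disc := by
    rw [hdisc, finChain_of_le hv, List.mem_cons, List.mem_range'_1]
    have := hbounds x hx
    rintro (hxd | hxd | hxd)
    · omega
    · omega
    · exact hnd.2.2 x hx x hxd rfl
  have hpush := reflTransGen_push (n := n) (fin := List.range' 1 (v + 1))
    (hp ▸ isChain_finChain _) hnd.1 hfresh
    fun x hx => ⟨le_trans (by omega) (hbounds x hx).1, (hbounds x hx).2⟩
  rw [hp] at hpush
  exact ⟨_, .head hback hpush⟩

theorem exists_reflTransGen_of_no_finConflict (hG : IsGraphOn n adj)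
    (hnc : ¬∃ v u w, FINConflict n adj v u w) :
    ∀ v ≤ n, ∃ disc, ReflTransGen (FINStep n adj) ([], [], [])
      (disc, List.range' 1 v, finChain n adj (v + 1))
  | 0, _ => by
    have := reflTransGen_push (disc := []) (fin := []) (stack := []) (p := finChain n adj 1)
      (by simpa using isChain_finChain 1) (nodup_finChain 1) (by simp)
      fun x hx => by have := bounds_of_mem_finChain hx; omega
    exact ⟨_, by simpa using this⟩
  | v + 1, hv => by
    obtain ⟨disc, hrun⟩ := exists_reflTransGen_of_no_finConflict hG hnc v (by omega)
    obtain ⟨disc', hstep⟩ := reflTransGen_finish_succ hG hnc hv hrun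
    exact ⟨disc', hrun.trans hstep⟩

/-- The identity labelling is a valid FIN numbering of `G` (the order in
which vertices finish in some DFS run) if and only if there is no FIN-conflicting pair. -/
theorem validFIN_iff_no_finConflict (n : ℕ) (adj : ℕ → ℕ → Prop) (hG : IsGraphOn n adj) :
    ValidFIN n adj ↔ ¬∃ v u w, FINConflict n adj v u w := by
  refine ⟨fun hvalid ⟨v, u, w, hc⟩ => not_finConflict_of_validFIN hG hvalid hc,
    fun hnc => ?_⟩
  obtain ⟨disc, hrun⟩ := exists_reflTransGen_of_no_finConflict hG hnc n le_rfl
  rw [finChain_of_lt n.lt_succ_self] at hrun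
  exact ⟨disc, hrun⟩
end
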